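/- arXiv:2302.10926 — 7 statements merged into one kernel-verified Lean document; each statement's English description precedes it below -/
import Mathlib

section
/- Every finite simple graph G has an ec-partition; in particular the edge coalition number EC(G) is well defined (there exists at least one partition of the edge set of G into parts each of which either is a singleton edge dominating set or is not an edge dominating set but forms an edge coalition with another part). -/
open SimpleGraph

/-- Two edges (as unordered pairs of vertices) share an endpoint. -/
def SharesEndpoint {V : Type*} (e f : Sym2 V) : Prop := ∃ v, v ∈ e ∧ v ∈ f

/-- `D` is an edge dominating set of `G`: `D` consists of edges of `G` and every
edge of `G` outside `D` shares an endpoint with some edge of `D`. -/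
def IsEdgeDominating {V : Type*} (G : SimpleGraph V) (D : Set (Sym2 V)) : Prop :=
  D ⊆ G.edgeSet ∧ ∀ e ∈ G.edgeSet \ D, ∃ f ∈ D, SharesEndpoint e f

/-- Two disjoint edge sets form an edge coalition: neither is an edge dominating
set but their union is. -/
def IsEdgeCoalition {V : Type*} (G : SimpleGraph V) (E₁ E₂ : Set (Sym2 V)) : Prop :=
  Disjoint E₁ E₂ ∧ ¬ IsEdgeDominating G E₁ ∧ ¬ IsEdgeDominating G E₂ ∧
    IsEdgeDominating G (E₁ ∪ E₂)

/-- An ec-partition of `G`: a partition of the edge set of `G` (into nonempty,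
pairwise disjoint parts) such that every part either is a singleton edge
dominating set, or is not an edge dominating set but forms an edge coalition
with another part. -/
def IsECPartition {V : Type*} (G : SimpleGraph V) (P : Set (Set (Sym2 V))) : Prop :=
  (∀ A ∈ P, A.Nonempty) ∧
  P.Pairwise Disjoint ∧
  ⋃₀ P = G.edgeSet ∧
  ∀ A ∈ P, ((∃ e, A = {e}) ∧ IsEdgeDominating G A) ∨
    (¬ IsEdgeDominating G A ∧ ∃ B ∈ P, B ≠ A ∧ IsEdgeCoalition G A B)

/-- The edge coalition number `EC(G)`: the maximum number of parts over all
ec-partitions of `G`. -/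
noncomputable def edgeCoalitionNumber {V : Type*} (G : SimpleGraph V) : ℕ :=
  sSup {k | ∃ P, IsECPartition G P ∧ P.ncard = k}

/-!
If every single edge dominates `G`, the partition into singletons works. Otherwise extend a
non-dominating edge to a maximal non-dominating edge set `A` and split the remaining edges into
singletons. Maximality makes `A ∪ {g}` dominating for every edge `g ∉ A`, so each non-dominating
singleton `{g}` is in coalition with `A`; and an edge `h` sharing no endpoint with `A`, which exists
since `A` does not dominate, gives a non-dominating singleton `{h}` in coalition with `A`.
-/

open Set

section

variable {V : Type*} {G : SimpleGraph V} {A : Set (Sym2 V)} {e g h : Sym2 V}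

theorem SharesEndpoint.symm (hs : SharesEndpoint e g) : SharesEndpoint g e :=
  let ⟨v, he, hg⟩ := hs
  ⟨v, hg, he⟩

theorem IsEdgeCoalition.symm {E₁ E₂ : Set (Sym2 V)} (hc : IsEdgeCoalition G E₁ E₂) :
    IsEdgeCoalition G E₂ E₁ :=
  let ⟨hdisj, h₁, h₂, hdom⟩ := hc
  ⟨hdisj.symm, h₂, h₁, union_comm E₁ E₂ ▸ hdom⟩

theorem not_isEdgeDominating_singleton (he : e ∈ G.edgeSet) (hne : e ≠ h)
    (hs : ¬ SharesEndpoint e h) : ¬ IsEdgeDominating G {h} := by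
  rintro ⟨-, hdom⟩
  obtain ⟨f, rfl, hef⟩ := hdom e ⟨he, hne⟩
  exact hs hef

theorem isEdgeCoalition_singleton (hA : ¬ IsEdgeDominating G A) (hg : ¬ IsEdgeDominating G {g})
    (hgA : g ∉ A) (hdom : IsEdgeDominating G (insert g A)) : IsEdgeCoalition G A {g} :=
  ⟨disjoint_singleton_right.2 hgA, hA, hg, union_singleton ▸ hdom⟩

theorem isEdgeDominating_insert_of_maximal
    (hA : Maximal (fun D => D ⊆ G.edgeSet ∧ ¬ IsEdgeDominating G D) A)
    (hg : g ∈ G.edgeSet) (hgA : g ∉ A) : IsEdgeDominating G (insert g A) := by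
  by_contra hnd
  exact hgA (hA.mem_of_prop_insert ⟨insert_subset hg hA.prop.1, hnd⟩)

theorem exists_mem_edgeSet_not_sharesEndpoint (hsub : A ⊆ G.edgeSet)
    (hA : ¬ IsEdgeDominating G A) : ∃ h ∈ G.edgeSet \ A, ∀ f ∈ A, ¬ SharesEndpoint h f := by
  simpa [IsEdgeDominating, hsub, and_assoc] using hA

theorem pairwise_disjoint_image_singleton {α : Type*} (s : Set α) :
    ((fun a => ({a} : Set α)) '' s).Pairwise Disjoint := by
  rintro _ ⟨f, -, rfl⟩ _ ⟨g, -, rfl⟩ hne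
  exact disjoint_singleton.2 fun hfg => hne (hfg ▸ rfl)

theorem sUnion_image_singleton {α : Type*} (s : Set α) :
    ⋃₀ ((fun a => ({a} : Set α)) '' s) = s := by
  rw [sUnion_image, biUnion_of_singleton]

theorem isECPartition_singletons (hG : ∀ e ∈ G.edgeSet, IsEdgeDominating G {e}) :
    IsECPartition G ((fun e => ({e} : Set (Sym2 V))) '' G.edgeSet) := by
  refine ⟨?_, pairwise_disjoint_image_singleton _, sUnion_image_singleton _, ?_⟩
  · rintro _ ⟨e, -, rfl⟩
    exact singleton_nonempty e
  · rintro _ ⟨e, he, rfl⟩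
    exact Or.inl ⟨⟨e, rfl⟩, hG e he⟩

theorem isECPartition_insert_singletons
    (hA : Maximal (fun D => D ⊆ G.edgeSet ∧ ¬ IsEdgeDominating G D) A) (hAne : A.Nonempty) :
    IsECPartition G (insert A ((fun g => ({g} : Set (Sym2 V))) '' (G.edgeSet \ A))) := by
  obtain ⟨hsub, hnd⟩ := hA.prop
  have hsingleton_ne : ∀ g ∉ A, ({g} : Set (Sym2 V)) ≠ A := fun g hgA hgeq =>
    let ⟨e, he⟩ := hAne
    hgA (mem_singleton_iff.1 (hgeq ▸ he) ▸ he)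
  refine ⟨?_, ?_, ?_, ?_⟩
  · rintro _ (rfl | ⟨g, -, rfl⟩)
    exacts [hAne, singleton_nonempty g]
  · refine (pairwise_disjoint_image_singleton _).insert_of_symm ?_
    rintro _ ⟨g, hg, rfl⟩ -
    exact disjoint_singleton_right.2 hg.2
  · rw [sUnion_insert, sUnion_image_singleton, union_sdiff_cancel hsub]
  · rintro _ (rfl | ⟨g, hg, rfl⟩)
    · obtain ⟨h, hh, hfar⟩ := exists_mem_edgeSet_not_sharesEndpoint hsub hnd
      obtain ⟨e, he⟩ := hAne
      have hhnd : ¬ IsEdgeDominating G {h} := not_isEdgeDominating_singleton (hsub he)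
        (fun heh => hh.2 (heh ▸ he)) fun hs => hfar e he hs.symm
      exact Or.inr ⟨hnd, {h}, Or.inr ⟨h, hh, rfl⟩, hsingleton_ne h hh.2,
        isEdgeCoalition_singleton hnd hhnd hh.2 (isEdgeDominating_insert_of_maximal hA hh.1 hh.2)⟩
    · by_cases hgd : IsEdgeDominating G {g}
      · exact Or.inl ⟨⟨g, rfl⟩, hgd⟩
      · exact Or.inr ⟨hgd, A, mem_insert A _, (hsingleton_ne g hg.2).symm,
          (isEdgeCoalition_singleton hnd hgd hg.2
            (isEdgeDominating_insert_of_maximal hA hg.1 hg.2)).symm⟩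

end

/-- Every finite simple graph has an ec-partition, so the edge coalition number
is well defined. -/
theorem exists_ec_partition {V : Type*} [Fintype V] (G : SimpleGraph V) :
    ∃ P : Set (Set (Sym2 V)), IsECPartition G P := by
  by_cases hG : ∀ e ∈ G.edgeSet, IsEdgeDominating G {e}
  · exact ⟨_, isECPartition_singletons hG⟩
  · push Not at hG
    obtain ⟨e, he, hnd⟩ := hG
    obtain ⟨A, heA, hA⟩ := Finite.exists_le_maximal
      (p := fun D => D ⊆ G.edgeSet ∧ ¬ IsEdgeDominating G D) ⟨singleton_subset_iff.2 he, hnd⟩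
    exact ⟨_, isECPartition_insert_singletons hA ⟨e, heA rfl⟩⟩
end

section
/- For any star K_{1,n} with n ≥ 1, EC(K_{1,n}) = n. -/
open SimpleGraph

/-- The star `K_{1,n}`: vertex `0` is the center, adjacent to the `n` leaves. -/
def starGraph (n : ℕ) : SimpleGraph (Fin (n + 1)) :=
  SimpleGraph.fromRel fun u _ => u = 0

/-! All edges of a star pass through its centre, so every nonempty set of edges is edge
dominating. A part of an ec-partition that is not edge dominating therefore cannot exist: every
part is a dominating singleton, and the only ec-partition is the partition into single edges. -/

namespace SimpleGraph

variable {V : Type*} {G : SimpleGraph V}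

theorem isEdgeDominating_of_nonempty
    (hG : ∀ e ∈ G.edgeSet, ∀ f ∈ G.edgeSet, SharesEndpoint e f)
    {D : Set (Sym2 V)} (hD : D ⊆ G.edgeSet) (hne : D.Nonempty) : IsEdgeDominating G D := by
  obtain ⟨f, hf⟩ := hne
  exact ⟨hD, fun e he => ⟨f, hf, hG e he.1 f (hD hf)⟩⟩

theorem IsECPartition.subset_edgeSet {P : Set (Set (Sym2 V))} (hP : IsECPartition G P)
    {A : Set (Sym2 V)} (hA : A ∈ P) : A ⊆ G.edgeSet :=
  hP.2.2.1 ▸ Set.subset_sUnion_of_mem hA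

theorem IsECPartition.eq_image_singleton
    (hG : ∀ e ∈ G.edgeSet, ∀ f ∈ G.edgeSet, SharesEndpoint e f)
    {P : Set (Set (Sym2 V))} (hP : IsECPartition G P) :
    P = (fun e => {e}) '' G.edgeSet := by
  have hsingleton : ∀ A ∈ P, ∃ e, A = {e} := by
    intro A hA
    rcases hP.2.2.2 A hA with ⟨hA_singleton, -⟩ | ⟨hA_not_dom, -⟩
    · exact hA_singleton
    · exact absurd (isEdgeDominating_of_nonempty hG (hP.subset_edgeSet hA) (hP.1 A hA))
        hA_not_dom
  ext A
  constructor
  · intro hA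
    obtain ⟨e, rfl⟩ := hsingleton A hA
    exact ⟨e, hP.subset_edgeSet hA rfl, rfl⟩
  · rintro ⟨e, he, rfl⟩
    obtain ⟨B, hB, heB⟩ := Set.mem_sUnion.mp (hP.2.2.1 ▸ he)
    obtain ⟨f, rfl⟩ := hsingleton B hB
    rwa [Set.mem_singleton_iff.mp heB]

theorem isECPartition_image_singleton
    (hG : ∀ e ∈ G.edgeSet, ∀ f ∈ G.edgeSet, SharesEndpoint e f) :
    IsECPartition G ((fun e => {e}) '' G.edgeSet) := by
  refine ⟨?_, ?_, ?_, ?_⟩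
  · rintro A ⟨e, -, rfl⟩
    exact Set.singleton_nonempty e
  · rintro A ⟨e, -, rfl⟩ B ⟨f, -, rfl⟩ hne
    exact Set.disjoint_singleton.mpr fun h => hne (congrArg _ h)
  · simp
  · rintro A ⟨e, he, rfl⟩
    exact Or.inl ⟨⟨e, rfl⟩, isEdgeDominating_of_nonempty hG
      (Set.singleton_subset_iff.mpr he) (Set.singleton_nonempty e)⟩

theorem edgeCoalitionNumber_eq_ncard_edgeSet
    (hG : ∀ e ∈ G.edgeSet, ∀ f ∈ G.edgeSet, SharesEndpoint e f) :
    edgeCoalitionNumber G = G.edgeSet.ncard := by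
  have hncard : ((fun e => ({e} : Set (Sym2 V))) '' G.edgeSet).ncard = G.edgeSet.ncard :=
    Set.ncard_image_of_injective _ Set.singleton_injective
  have hsizes : {k | ∃ P, IsECPartition G P ∧ P.ncard = k} = {G.edgeSet.ncard} := by
    ext k
    constructor
    · rintro ⟨P, hP, rfl⟩
      rw [hP.eq_image_singleton hG, hncard]
      rfl
    · rintro rfl
      exact ⟨_, isECPartition_image_singleton hG, hncard⟩
  rw [edgeCoalitionNumber, hsizes, csSup_singleton]

theorem mem_of_mem_edgeSet_starGraph {r : V} {e : Sym2 V} (he : e ∈ (starGraph r).edgeSet) :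
    r ∈ e := by
  induction e using Sym2.ind with
  | _ u v =>
    rcases ((mem_edgeSet _).mp he |> starGraph_adj.mp).2 with rfl | rfl <;> simp

theorem edgeCoalitionNumber_starGraph [Fintype V] [DecidableEq V] (r : V) :
    edgeCoalitionNumber (starGraph r) = Fintype.card V - 1 := by
  have hedges : (starGraph r).edgeSet = (starGraph r).incidenceSet r :=
    Set.Subset.antisymm (fun e he => ⟨he, mem_of_mem_edgeSet_starGraph he⟩)
      (incidenceSet_subset _ r)
  rw [edgeCoalitionNumber_eq_ncard_edgeSet fun e he f hf =>
      ⟨r, mem_of_mem_edgeSet_starGraph he, mem_of_mem_edgeSet_starGraph hf⟩,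
    hedges, ← Nat.card_coe_set_eq, Nat.card_eq_fintype_card, card_incidenceSet_eq_degree,
    degree_starGraph_center]

end SimpleGraph

theorem edgeCoalitionNumber_star_general (n : ℕ) :
    edgeCoalitionNumber (_root_.starGraph n) = n := by
  have hstar : _root_.starGraph n = SimpleGraph.starGraph (0 : Fin (n + 1)) := rfl
  rw [hstar, SimpleGraph.edgeCoalitionNumber_starGraph, Fintype.card_fin, Nat.add_sub_cancel]

/-- For any star `K_{1,n}` with `n ≥ 1`, `EC(K_{1,n}) = n`. -/
theorem edgeCoalitionNumber_star (n : ℕ) (hn : 1 ≤ n) :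
    edgeCoalitionNumber (_root_.starGraph n) = n :=
  edgeCoalitionNumber_star_general n
end

section
/- For any double star S_{p,q} with p, q ≥ 1, EC(S_{p,q}) = p + q + 1, and the partition of the edge set into singletons (the edge ab together with all pendant edges, each as a singleton part) is an ec-partition achieving this value. -/
open SimpleGraph

/-- The double star `S_{p,q}`: support vertices `a = .inl none` and
`b = .inr none` are adjacent; `a` is adjacent to `p` leaves and `b` to
`q` leaves. -/
def doubleStar (p q : ℕ) : SimpleGraph (Option (Fin p) ⊕ Option (Fin q)) :=
  SimpleGraph.fromRel fun u v =>
    (u = Sum.inl none ∧ (v = Sum.inr none ∨ ∃ i, v = Sum.inl (some i))) ∨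
    (u = Sum.inr none ∧ ∃ j, v = Sum.inr (some j))

lemma mem_ds_edgeSet {p q : ℕ} {e : Sym2 (Option (Fin p) ⊕ Option (Fin q))} :
    e ∈ (doubleStar p q).edgeSet ↔
      e = s(Sum.inl none, Sum.inr none) ∨
      (∃ i, e = s(Sum.inl none, Sum.inl (some i))) ∨
      (∃ j, e = s(Sum.inr none, Sum.inr (some j))) := by
  induction e using Sym2.ind with
  | _ u v =>
    rw [SimpleGraph.mem_edgeSet, doubleStar, fromRel_adj]
    constructor
    · rintro ⟨hne, (⟨rfl, (rfl | ⟨i, rfl⟩)⟩ | ⟨rfl, j, rfl⟩) |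
        (⟨rfl, (rfl | ⟨i, rfl⟩)⟩ | ⟨rfl, j, rfl⟩)⟩
      · exact Or.inl rfl
      · exact Or.inr (Or.inl ⟨i, rfl⟩)
      · exact Or.inr (Or.inr ⟨j, rfl⟩)
      · exact Or.inl (Sym2.eq_swap)
      · exact Or.inr (Or.inl ⟨i, Sym2.eq_swap⟩)
      · exact Or.inr (Or.inr ⟨j, Sym2.eq_swap⟩)
    · rintro (h | ⟨i, h⟩ | ⟨j, h⟩) <;> rw [Sym2.eq_iff] at h <;>
        rcases h with ⟨rfl, rfl⟩ | ⟨rfl, rfl⟩ <;> simp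

lemma ds_edgeSet_eq (p q : ℕ) :
    (doubleStar p q).edgeSet =
      {s(Sum.inl none, Sum.inr none)} ∪
      Set.range (fun i : Fin p => s(Sum.inl none, Sum.inl (some i))) ∪
      Set.range (fun j : Fin q => s(Sum.inr none, Sum.inr (some j))) := by
  ext e
  rw [mem_ds_edgeSet]
  simp [Set.mem_union, eq_comm, or_assoc]

lemma ds_edgeSet_ncard (p q : ℕ) : (doubleStar p q).edgeSet.ncard = p + q + 1 := by
  rw [ds_edgeSet_eq]
  have h1 : Function.Injective (fun i : Fin p => s(Sum.inl none, Sum.inl (some i)) :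
      Fin p → Sym2 (Option (Fin p) ⊕ Option (Fin q))) := by
    intro i j h
    simp [Sym2.eq_iff] at h
    exact h
  have h2 : Function.Injective (fun j : Fin q => s(Sum.inr none, Sum.inr (some j)) :
      Fin q → Sym2 (Option (Fin p) ⊕ Option (Fin q))) := by
    intro i j h
    simp [Sym2.eq_iff] at h
    exact h
  have d1 : Disjoint ({s(Sum.inl none, Sum.inr none)} ∪
      Set.range (fun i : Fin p => s(Sum.inl none, Sum.inl (some i))))
      (Set.range (fun j : Fin q => s(Sum.inr none, Sum.inr (some j)))) := by
    rw [Set.disjoint_right]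
    rintro e ⟨j, rfl⟩
    simp [Sym2.eq_iff]
  have d2 : Disjoint ({s(Sum.inl none, Sum.inr none)} :
      Set (Sym2 (Option (Fin p) ⊕ Option (Fin q))))
      (Set.range (fun i : Fin p => s(Sum.inl none, Sum.inl (some i)))) := by
    rw [Set.disjoint_right]
    rintro e ⟨i, rfl⟩
    simp [Sym2.eq_iff]
  rw [Set.ncard_union_eq d1 (Set.toFinite _) (Set.toFinite _),
      Set.ncard_union_eq d2 (Set.toFinite _) (Set.toFinite _)]
  rw [Set.ncard_singleton, ← Set.image_univ, ← Set.image_univ,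
      Set.ncard_image_of_injective _ h1, Set.ncard_image_of_injective _ h2,
      Set.ncard_univ, Set.ncard_univ]
  simp [Nat.card_eq_fintype_card]
  omega

lemma ds_mem_ab {p q : ℕ} {e : Sym2 (Option (Fin p) ⊕ Option (Fin q))}
    (he : e ∈ (doubleStar p q).edgeSet) :
    (Sum.inl none : Option (Fin p) ⊕ Option (Fin q)) ∈ e ∨
    (Sum.inr none : Option (Fin p) ⊕ Option (Fin q)) ∈ e := by
  rw [mem_ds_edgeSet] at he
  rcases he with rfl | ⟨i, rfl⟩ | ⟨j, rfl⟩ <;> simp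

lemma ds_dom_ab (p q : ℕ) :
    IsEdgeDominating (doubleStar p q) {s(Sum.inl none, Sum.inr none)} := by
  constructor
  · rintro e rfl
    exact mem_ds_edgeSet.2 (Or.inl rfl)
  · rintro e ⟨he, -⟩
    refine ⟨_, rfl, ?_⟩
    rcases ds_mem_ab he with h | h
    · exact ⟨_, h, by simp⟩
    · exact ⟨_, h, by simp⟩

lemma ds_not_dom_left (p q : ℕ) (hq : 1 ≤ q) (i : Fin p) :
    ¬ IsEdgeDominating (doubleStar p q) {s(Sum.inl none, Sum.inl (some i))} := by
  rintro ⟨-, h⟩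
  obtain ⟨f, hf, v, hv1, hv2⟩ := h s(Sum.inr none, Sum.inr (some ⟨0, hq⟩))
    ⟨mem_ds_edgeSet.2 (Or.inr (Or.inr ⟨_, rfl⟩)), by simp [Sym2.eq_iff]⟩
  rw [Set.mem_singleton_iff] at hf
  subst hf
  simp [Sym2.mem_iff] at hv1 hv2
  rcases hv1 with rfl | rfl <;> rcases hv2 with h | h <;> simp_all

lemma ds_not_dom_right (p q : ℕ) (hp : 1 ≤ p) (j : Fin q) :
    ¬ IsEdgeDominating (doubleStar p q) {s(Sum.inr none, Sum.inr (some j))} := by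
  rintro ⟨-, h⟩
  obtain ⟨f, hf, v, hv1, hv2⟩ := h s(Sum.inl none, Sum.inl (some ⟨0, hp⟩))
    ⟨mem_ds_edgeSet.2 (Or.inr (Or.inl ⟨_, rfl⟩)), by simp [Sym2.eq_iff]⟩
  rw [Set.mem_singleton_iff] at hf
  subst hf
  simp [Sym2.mem_iff] at hv1 hv2
  rcases hv1 with rfl | rfl <;> rcases hv2 with h | h <;> simp_all

lemma ds_dom_pair (p q : ℕ) (i : Fin p) (j : Fin q) :
    IsEdgeDominating (doubleStar p q)
      {s(Sum.inl none, Sum.inl (some i)), s(Sum.inr none, Sum.inr (some j))} := by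
  constructor
  · rintro e (rfl | rfl)
    · exact mem_ds_edgeSet.2 (Or.inr (Or.inl ⟨_, rfl⟩))
    · exact mem_ds_edgeSet.2 (Or.inr (Or.inr ⟨_, rfl⟩))
  · rintro e ⟨he, -⟩
    rcases ds_mem_ab he with h | h
    · exact ⟨_, Or.inl rfl, _, h, by simp⟩
    · exact ⟨_, Or.inr rfl, _, h, by simp⟩

lemma ec_ncard_le {V : Type*} [Fintype V] [Nonempty V] (G : SimpleGraph V)
    (P : Set (Set (Sym2 V))) (hP : IsECPartition G P) : P.ncard ≤ G.edgeSet.ncard := by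
  classical
  haveI : Nonempty (Sym2 V) := ⟨s(Classical.arbitrary V, Classical.arbitrary V)⟩
  set f : Set (Sym2 V) → Sym2 V :=
    fun A => if h : A.Nonempty then h.some else Classical.arbitrary _ with hf
  have hmem : ∀ A ∈ P, f A ∈ A := by
    intro A hA
    have h := hP.1 A hA
    rw [hf]
    simp only [dif_pos h]
    exact h.some_mem
  refine Set.ncard_le_ncard_of_injOn f (fun A hA => ?_) (fun A hA B hB hAB => ?_)
    (Set.toFinite _)
  · have := hmem A hA
    rw [← hP.2.2.1]
    exact ⟨A, hA, this⟩
  · by_contra hne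
    have hd := hP.2.1 hA hB hne
    exact (Set.disjoint_left.1 hd (hmem A hA)) (hAB ▸ hmem B hB)

lemma ds_singleton_ec (p q : ℕ) (hp : 1 ≤ p) (hq : 1 ≤ q) :
    IsECPartition (doubleStar p q)
      ((fun e => ({e} : Set (Sym2 (Option (Fin p) ⊕ Option (Fin q))))) ''
        (doubleStar p q).edgeSet) := by
  refine ⟨?_, ?_, ?_, ?_⟩
  · rintro A ⟨e, he, rfl⟩
    exact ⟨e, rfl⟩
  · rintro A ⟨e, he, rfl⟩ B ⟨f, hf, rfl⟩ hne
    simp only [Set.disjoint_singleton]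
    rintro rfl
    exact hne rfl
  · rw [Set.sUnion_image]
    exact Set.biUnion_of_singleton _
  · rintro A ⟨e, he, rfl⟩
    rcases mem_ds_edgeSet.1 he with rfl | ⟨i, rfl⟩ | ⟨j, rfl⟩
    · exact Or.inl ⟨⟨_, rfl⟩, ds_dom_ab p q⟩
    · refine Or.inr ⟨ds_not_dom_left p q hq i, {s(Sum.inr none, Sum.inr (some ⟨0, hq⟩))},
        ⟨_, mem_ds_edgeSet.2 (Or.inr (Or.inr ⟨_, rfl⟩)), rfl⟩, ?_, ?_, ?_, ?_, ?_⟩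
      · simp [Sym2.eq_iff]
      · simp [Sym2.eq_iff]
      · exact ds_not_dom_left p q hq i
      · exact ds_not_dom_right p q hp _
      · rw [Set.singleton_union]
        exact ds_dom_pair p q i _
    · refine Or.inr ⟨ds_not_dom_right p q hp j, {s(Sum.inl none, Sum.inl (some ⟨0, hp⟩))},
        ⟨_, mem_ds_edgeSet.2 (Or.inr (Or.inl ⟨_, rfl⟩)), rfl⟩, ?_, ?_, ?_, ?_, ?_⟩
      · simp [Sym2.eq_iff]
      · simp [Sym2.eq_iff]
      · exact ds_not_dom_right p q hp j
      · exact ds_not_dom_left p q hq _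
      · have : ({s(Sum.inr none, Sum.inr (some j))} ∪
            {s(Sum.inl none, Sum.inl (some ⟨0, hp⟩))} :
            Set (Sym2 (Option (Fin p) ⊕ Option (Fin q)))) =
            {s(Sum.inl none, Sum.inl (some ⟨0, hp⟩)), s(Sum.inr none, Sum.inr (some j))} := by
          rw [Set.union_comm, Set.singleton_union]
        rw [this]
        exact ds_dom_pair p q _ j

/-- For the double star `S_{p,q}` with `p, q ≥ 1`, `EC(S_{p,q}) = p + q + 1`,
and the singleton partition of its edge set is an ec-partition achieving this
value. -/
theorem edgeCoalitionNumber_doubleStar (p q : ℕ) (hp : 1 ≤ p) (hq : 1 ≤ q) :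
    edgeCoalitionNumber (doubleStar p q) = p + q + 1 ∧
    IsECPartition (doubleStar p q)
      ((fun e => ({e} : Set (Sym2 (Option (Fin p) ⊕ Option (Fin q))))) ''
        (doubleStar p q).edgeSet) ∧
    ((fun e => ({e} : Set (Sym2 (Option (Fin p) ⊕ Option (Fin q))))) ''
        (doubleStar p q).edgeSet).ncard = p + q + 1 := by
  have hec := ds_singleton_ec p q hp hq
  have hcard : ((fun e => ({e} : Set (Sym2 (Option (Fin p) ⊕ Option (Fin q))))) ''
      (doubleStar p q).edgeSet).ncard = p + q + 1 := by
    rw [Set.ncard_image_of_injective _ Set.singleton_injective, ds_edgeSet_ncard]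
  refine ⟨?_, hec, hcard⟩
  have hub : ∀ k ∈ {k | ∃ P, IsECPartition (doubleStar p q) P ∧ P.ncard = k},
      k ≤ p + q + 1 := by
    rintro k ⟨P, hP, rfl⟩
    calc P.ncard ≤ (doubleStar p q).edgeSet.ncard := ec_ncard_le _ P hP
    _ = p + q + 1 := ds_edgeSet_ncard p q
  refine le_antisymm (csSup_le ⟨p + q + 1, _, hec, hcard⟩ hub) (le_csSup ⟨p + q + 1, hub⟩
    ⟨_, hec, hcard⟩)
end

section
/- Let G be a finite simple graph with maximum degree Δ(G) ≥ 2, and let π be an ec-partition of G with EC(G) parts. Then every part X ∈ π forms an edge coalition with at most 2Δ(G) − 1 other parts of π. -/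
open SimpleGraph

/-- In an ec-partition of maximum order of a graph `G` with `Δ(G) ≥ 2`, every
part forms an edge coalition with at most `2Δ(G) - 1` other parts. -/
theorem coalition_partners_le {V : Type*} [Fintype V] (G : SimpleGraph V)
    [DecidableRel G.Adj] (hΔ : 2 ≤ G.maxDegree)
    (P : Set (Set (Sym2 V))) (hP : IsECPartition G P)
    (hmax : P.ncard = edgeCoalitionNumber G) :
    ∀ X ∈ P, {Y | Y ∈ P ∧ Y ≠ X ∧ IsEdgeCoalition G X Y}.ncard ≤ 2 * G.maxDegree - 1 := by
  classical
  intro X hX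
  by_cases hXd : IsEdgeDominating G X
  · have hS : {Y | Y ∈ P ∧ Y ≠ X ∧ IsEdgeCoalition G X Y} = ∅ := by
      ext Y
      simp only [Set.mem_setOf_eq, Set.mem_empty_iff_false, iff_false]
      rintro ⟨-, -, -, h, -⟩
      exact h hXd
    simp [hS]
  · obtain ⟨hne, hdisj, hcover, -⟩ := hP
    have hXsub : X ⊆ G.edgeSet := by
      rw [← hcover]; exact Set.subset_sUnion_of_mem hX
    have hex : ¬ ∀ e ∈ G.edgeSet \ X, ∃ f ∈ X, SharesEndpoint e f := by
      intro h; exact hXd ⟨hXsub, h⟩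
    push_neg at hex
    obtain ⟨e, he, hnd⟩ := hex
    induction e using Sym2.ind with
    | _ u v =>
    have hadj : G.Adj u v := he.1
    have heX : s(u, v) ∉ X := he.2
    set N : Set (Sym2 V) := {f | f ∈ G.edgeSet ∧ SharesEndpoint s(u, v) f} with hN
    -- every coalition partner meets N
    have hmeet : ∀ Y ∈ {Y | Y ∈ P ∧ Y ≠ X ∧ IsEdgeCoalition G X Y}, (Y ∩ N).Nonempty := by
      rintro Y ⟨hYP, hYne, -, -, -, hdomsub, hdom⟩
      by_cases hmem : s(u, v) ∈ X ∪ Y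
      · rcases hmem with hmem | hmem
        · exact absurd hmem heX
        · exact ⟨s(u, v), hmem, G.mem_edgeSet.mpr hadj, u, Sym2.mem_mk_left u v,
            Sym2.mem_mk_left u v⟩
      · obtain ⟨f, hfXY, hsh⟩ := hdom s(u, v) ⟨G.mem_edgeSet.mpr hadj, hmem⟩
        rcases hfXY with hfX | hfY
        · exact absurd hsh (hnd f hfX)
        · exact ⟨f, hfY, hdomsub (Or.inr hfY), hsh⟩
    -- pick an edge of N in each partner; injectivity from disjointness of parts
    have hcard1 : {Y | Y ∈ P ∧ Y ≠ X ∧ IsEdgeCoalition G X Y}.ncard ≤ N.ncard := by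
      apply Set.ncard_le_ncard_of_injOn
        (fun Y => if h : (Y ∩ N).Nonempty then h.some else s(u, v))
      · intro Y hY
        have h := hmeet Y hY
        simp only [h, dif_pos]
        exact h.some_mem.2
      · intro Y1 hY1 Y2 hY2 hfeq
        by_contra hne12
        have h1 := hmeet Y1 hY1
        have h2 := hmeet Y2 hY2
        simp only [h1, h2, dif_pos] at hfeq
        have hd : Disjoint Y1 Y2 := hdisj hY1.1 hY2.1 hne12
        exact hd.ne_of_mem h1.some_mem.1 h2.some_mem.1 hfeq
    -- N is contained in the union of the two incidence sets
    have hNsub : N ⊆ G.incidenceSet u ∪ G.incidenceSet v := by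
      rintro f ⟨hfE, w, hw1, hw2⟩
      rcases Sym2.mem_iff.mp hw1 with rfl | rfl
      · exact Or.inl ⟨hfE, hw2⟩
      · exact Or.inr ⟨hfE, hw2⟩
    have hcardu : (G.incidenceSet u).ncard = G.degree u := by
      rw [Set.ncard_eq_toFinset_card', Set.toFinset_card]
      exact G.card_incidenceSet_eq_degree u
    have hcardv : (G.incidenceSet v).ncard = G.degree v := by
      rw [Set.ncard_eq_toFinset_card', Set.toFinset_card]
      exact G.card_incidenceSet_eq_degree v
    have hinter : 0 < (G.incidenceSet u ∩ G.incidenceSet v).ncard := by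
      rw [Set.ncard_pos (Set.toFinite _)]
      exact ⟨s(u, v), ⟨G.mem_edgeSet.mpr hadj, Sym2.mem_mk_left u v⟩,
        ⟨G.mem_edgeSet.mpr hadj, Sym2.mem_mk_right u v⟩⟩
    have hsum := Set.ncard_union_add_ncard_inter (G.incidenceSet u) (G.incidenceSet v)
    have hNle : N.ncard ≤ (G.incidenceSet u ∪ G.incidenceSet v).ncard :=
      Set.ncard_le_ncard hNsub (Set.toFinite _)
    have hdu : G.degree u ≤ G.maxDegree := G.degree_le_maxDegree u
    have hdv : G.degree v ≤ G.maxDegree := G.degree_le_maxDegree v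
    omega
end

section
/- For a finite connected simple graph G with at least one edge, EC(G) = 1 if and only if G is isomorphic to K₂. -/
open SimpleGraph

/-- Bound on the number of parts of an ec-partition. -/
lemma ecp_ncard_le {V : Type*} [Fintype V] (G : SimpleGraph V) {P : Set (Set (Sym2 V))}
    (hP : IsECPartition G P) (e0 : Sym2 V) : P.ncard ≤ G.edgeSet.ncard := by
  classical
  obtain ⟨hne, hdisj, hunion, -⟩ := hP
  have hfin : G.edgeSet.Finite := Set.toFinite _
  apply Set.ncard_le_ncard_of_injOn (fun A => if h : A.Nonempty then h.some else e0)
  · intro A hA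
    have h := hne A hA
    simp only [dif_pos h]
    have hm : h.some ∈ A := h.some_mem
    have := Set.subset_sUnion_of_mem hA hm
    rwa [hunion] at this
  · intro A hA B hB hEq
    by_contra hAB
    have hd := hdisj hA hB hAB
    have hA' := hne A hA
    have hB' := hne B hB
    simp only [dif_pos hA', dif_pos hB'] at hEq
    exact Set.disjoint_left.mp hd hA'.some_mem (hEq ▸ hB'.some_mem)

/-- If the edge set is a single edge, the edge coalition number is 1. -/
lemma ec_of_singleton {V : Type*} [Fintype V] (G : SimpleGraph V) {e : Sym2 V}
    (hes : G.edgeSet = {e}) : edgeCoalitionNumber G = 1 := by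
  classical
  have hmem : IsECPartition G {({e} : Set (Sym2 V))} := by
    refine ⟨?_, Set.pairwise_singleton _ _, by simp [hes], ?_⟩
    · intro A hA
      rw [Set.mem_singleton_iff] at hA; subst hA
      exact ⟨e, rfl⟩
    · intro A hA
      rw [Set.mem_singleton_iff] at hA; subst hA
      left
      refine ⟨⟨e, rfl⟩, ?_, ?_⟩
      · rw [hes]
      · intro f hf
        rw [hes] at hf
        simp at hf
  have hset : {k | ∃ P, IsECPartition G P ∧ P.ncard = k} = {1} := by
    ext k
    simp only [Set.mem_setOf_eq, Set.mem_singleton_iff]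
    constructor
    · rintro ⟨P, hP, rfl⟩
      have hsub : P ⊆ {({e} : Set (Sym2 V))} := by
        intro A hA
        have h1 : A ⊆ {e} := by
          rw [← hes, ← hP.2.2.1]
          exact Set.subset_sUnion_of_mem hA
        have h2 := hP.1 A hA
        rw [Set.mem_singleton_iff]
        rcases Set.subset_singleton_iff_eq.mp h1 with h | h
        · exact absurd h h2.ne_empty
        · exact h
      have hPne : P.Nonempty := by
        by_contra h
        rw [Set.not_nonempty_iff_eq_empty] at h
        have h2 := hP.2.2.1
        rw [h, hes] at h2
        simp only [Set.sUnion_empty] at h2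
        exact Set.singleton_ne_empty e h2.symm
      have hPeq : P = {({e} : Set (Sym2 V))} := by
        rcases Set.subset_singleton_iff_eq.mp hsub with h | h
        · exact absurd h hPne.ne_empty
        · exact h
      rw [hPeq]; simp
    · rintro rfl
      exact ⟨_, hmem, by simp⟩
  rw [edgeCoalitionNumber, hset]
  exact csSup_singleton 1

/-- For a finite connected simple graph with at least one edge, `EC(G) = 1` iff
`G` is isomorphic to `K₂`. -/
theorem edgeCoalitionNumber_eq_one_iff {V : Type*} [Fintype V] (G : SimpleGraph V)
    (hconn : G.Connected) (hedge : G.edgeSet.Nonempty) :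
    edgeCoalitionNumber G = 1 ↔ Nonempty (G ≃g (⊤ : SimpleGraph (Fin 2))) := by
  classical
  constructor
  · intro h1
    set S := {k | ∃ P, IsECPartition G P ∧ P.ncard = k} with hSdef
    have hbdd : BddAbove S := by
      refine ⟨G.edgeSet.ncard, ?_⟩
      rintro k ⟨P, hP, rfl⟩
      exact ecp_ncard_le G hP hedge.some
    have hSne : S.Nonempty := by
      by_contra h
      rw [Set.not_nonempty_iff_eq_empty] at h
      rw [edgeCoalitionNumber, ← hSdef, h] at h1
      simp at h1
    have h1m : (1 : ℕ) ∈ S := by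
      rw [edgeCoalitionNumber, ← hSdef] at h1
      rw [← h1]
      exact Nat.sSup_mem hSne hbdd
    obtain ⟨P, hP, hPc⟩ := h1m
    obtain ⟨A, rfl⟩ := Set.ncard_eq_one.mp hPc
    have hAeq : A = G.edgeSet := by
      have := hP.2.2.1; simpa using this
    rcases hP.2.2.2 A rfl with ⟨⟨e, he⟩, -⟩ | ⟨-, B, hB, hBA, -⟩
    · have hes : G.edgeSet = {e} := by rw [← hAeq, he]
      clear he hAeq hP hPc
      induction e using Sym2.ind with
      | _ u v =>
        have huv : G.Adj u v := by
          rw [← mem_edgeSet, hes]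
          exact Set.mem_singleton _
        have huvne : u ≠ v := huv.ne
        have hall : ∀ x : V, x = u ∨ x = v := by
          intro x
          obtain ⟨w⟩ := hconn.preconnected x u
          cases w with
          | nil => exact Or.inl rfl
          | cons h p =>
            have hm : s(x, _) ∈ G.edgeSet := h
            rw [hes, Set.mem_singleton_iff, Sym2.eq_iff] at hm
            rcases hm with ⟨hx, -⟩ | ⟨hx, -⟩
            · exact Or.inl hx
            · exact Or.inr hx
        refine ⟨⟨⟨fun x => if x = u then 0 else 1, fun i => if i = 0 then u else v,
          ?_, ?_⟩, ?_⟩⟩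
        · intro x
          by_cases hx : x = u
          · simp [hx]
          · have hv : x = v := (hall x).resolve_left hx
            simp [hx, hv, huvne.symm]
        · intro i
          fin_cases i
          · simp
          · simp [huvne.symm]
        · intro a b
          simp only [Equiv.coe_fn_mk, top_adj]
          constructor
          · intro hfab
            rcases hall a with ha | ha <;> rcases hall b with hb | hb <;>
              subst ha <;> subst hb
            · simp at hfab
            · exact huv
            · exact huv.symm
            · simp at hfab
          · intro hab
            have hm : s(a, b) ∈ G.edgeSet := hab
            rw [hes, Set.mem_singleton_iff, Sym2.eq_iff] at hm
            rcases hm with ⟨rfl, rfl⟩ | ⟨rfl, rfl⟩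
            · simp [huvne.symm]
            · simp [huvne.symm]
    · exact absurd (Set.mem_singleton_iff.mp hB) hBA
  · rintro ⟨φ⟩
    set u := φ.symm 0 with hu
    set v := φ.symm 1 with hv
    have huv : G.Adj u v := by
      have h01 : (⊤ : SimpleGraph (Fin 2)).Adj 0 1 := by simp
      exact φ.symm.map_rel_iff.mpr h01
    have hfin2 : ∀ x : Fin 2, x = 0 ∨ x = 1 := by decide
    have key : ∀ x : V, x = u ∨ x = v := by
      intro x
      rcases hfin2 (φ x) with h | h
      · left; rw [hu, ← h, RelIso.symm_apply_apply]
      · right; rw [hv, ← h, RelIso.symm_apply_apply]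
    have hes : G.edgeSet = {s(u, v)} := by
      ext f
      induction f using Sym2.ind with
      | _ a b =>
        simp only [mem_edgeSet, Set.mem_singleton_iff, Sym2.eq_iff]
        constructor
        · intro hab
          have hne := hab.ne
          have hune := huv.ne
          rcases key a with rfl | rfl <;> rcases key b with rfl | rfl
          · exact absurd rfl hne
          · exact Or.inl ⟨rfl, rfl⟩
          · exact Or.inr ⟨rfl, rfl⟩
          · exact absurd rfl hne
        · rintro (⟨rfl, rfl⟩ | ⟨rfl, rfl⟩)
          · exact huv
          · exact huv.symm
    exact ec_of_singleton G hes
end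

section
/- For a finite connected simple graph G, EC(G) = 3 if and only if G is isomorphic to one of K₃, P₄, K_{1,3}. -/
open SimpleGraph

/-! If some edge `e` dominates, the singletons form an ec-partition: an edge `h` that does not
dominate misses some edge `g`, and since both meet `e` they cover its two ends, so `{h, g}`
dominates. Hence `EC(G) = |E(G)|`, and the connected graphs with three edges are `K₃`, `P₄` and
`K_{1,3}`, each of which has a dominating edge.

If no edge dominates, take a minimal edge dominating set `D₁`, a minimal one `D₂` inside its
complement (which dominates, by Ore's argument), and a maximal non-dominating set `L` of the
remaining edges. If `L ∪ {y}` does not dominate for some `y ∈ D₁ ∪ D₂`, say `y ∈ D₂`, then for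
`x ∈ D₁` the coalitions `{x}, D₁ \ {x}` and `D₂ \ {y}, L ∪ {y}` together with the singletons of
the other edges form an ec-partition. Otherwise `L` is a maximal non-dominating set of `G`, and the
coalitions `{s}, S \ {s}` and `{w}, L` do, where `w ∈ D₁` and `S` is a minimal dominating set
avoiding `L ∪ {w}`. Either way `EC(G) ≥ 4`. -/

theorem Set.ncard_le_ncard_sUnion {α : Type*} {P : Set (Set α)} (hne : ∀ A ∈ P, A.Nonempty)
    (hP : P.Pairwise Disjoint) (hfin : (⋃₀ P).Finite) : P.ncard ≤ (⋃₀ P).ncard := by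
  have := hfin.to_subtype
  rw [← Nat.card_coe_set_eq, ← Nat.card_coe_set_eq]
  refine Nat.card_le_card_of_injective
    (fun A ↦ ⟨(hne A A.2).some, A, A.2, (hne A A.2).some_mem⟩) fun A B hAB ↦ ?_
  by_contra hne'
  have hmem : (hne A A.2).some ∈ (B : Set α) := by
    rw [show (hne A A.2).some = (hne B B.2).some from congrArg Subtype.val hAB]
    exact (hne B B.2).some_mem
  exact Set.disjoint_left.1 (hP A.2 B.2 (Subtype.coe_ne_coe.2 hne')) (hne A A.2).some_mem hmem

theorem Set.pairwise_disjoint_union_image_singleton {α : Type*} {Q : Set (Set α)} {R : Set α}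
    (hQ : Q.Pairwise Disjoint) (hQR : ∀ A ∈ Q, Disjoint A R) :
    (Q ∪ (fun e ↦ ({e} : Set α)) '' R).Pairwise Disjoint := by
  refine Set.pairwise_union_of_symm.2 ⟨hQ, ?_, ?_⟩
  · rintro _ ⟨e, -, rfl⟩ _ ⟨f, -, rfl⟩ hef
    exact Set.disjoint_singleton.2 fun h ↦ hef (h ▸ rfl)
  · rintro A hA _ ⟨e, he, rfl⟩ -
    exact Set.disjoint_singleton_right.2 fun heA ↦ Set.disjoint_left.1 (hQR A hA) heA he

namespace SimpleGraph

variable {V : Type*} {G : SimpleGraph V}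

theorem SharesEndpoint.symm {e f : Sym2 V} (h : SharesEndpoint e f) : SharesEndpoint f e :=
  let ⟨v, he, hf⟩ := h; ⟨v, hf, he⟩

theorem sharesEndpoint_self (e : Sym2 V) : SharesEndpoint e e :=
  ⟨_, e.out_fst_mem, e.out_fst_mem⟩

theorem IsEdgeDominating.mono {D D' : Set (Sym2 V)} (h : IsEdgeDominating G D) (hDD' : D ⊆ D')
    (hD' : D' ⊆ G.edgeSet) : IsEdgeDominating G D' :=
  ⟨hD', fun e he ↦
    let ⟨f, hf, hef⟩ := h.2 e ⟨he.1, fun heD ↦ he.2 (hDD' heD)⟩; ⟨f, hDD' hf, hef⟩⟩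

theorem isEdgeDominating_edgeSet : IsEdgeDominating G G.edgeSet :=
  ⟨subset_rfl, fun _ he ↦ (he.2 he.1).elim⟩

theorem isEdgeDominating_iff_forall_sharesEndpoint {D : Set (Sym2 V)} :
    IsEdgeDominating G D ↔ D ⊆ G.edgeSet ∧ ∀ e ∈ G.edgeSet, ∃ f ∈ D, SharesEndpoint e f := by
  refine ⟨fun h ↦ ⟨h.1, fun e he ↦ ?_⟩, fun h ↦ ⟨h.1, fun e he ↦ h.2 e he.1⟩⟩
  by_cases heD : e ∈ D
  · exact ⟨e, heD, sharesEndpoint_self e⟩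
  · exact h.2 e ⟨he, heD⟩

theorem isEdgeDominating_singleton_iff {e : Sym2 V} :
    IsEdgeDominating G {e} ↔ e ∈ G.edgeSet ∧ ∀ f ∈ G.edgeSet, SharesEndpoint f e := by
  simp [isEdgeDominating_iff_forall_sharesEndpoint]

theorem IsEdgeDominating.nonempty {D : Set (Sym2 V)} (h : IsEdgeDominating G D)
    (hE : G.edgeSet.Nonempty) : D.Nonempty :=
  let ⟨e, he⟩ := hE
  let ⟨f, hf, _⟩ := (isEdgeDominating_iff_forall_sharesEndpoint.1 h).2 e he
  ⟨f, hf⟩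

theorem isEdgeDominating_singleton_of_edgeSet_subset {e : Sym2 V} (he : e ∈ G.edgeSet)
    (hE : G.edgeSet ⊆ {e}) : IsEdgeDominating G {e} :=
  ⟨Set.singleton_subset_iff.2 he, fun _ hf ↦ (hf.2 (hE hf.1)).elim⟩

theorem IsEdgeCoalition.ne {A B : Set (Sym2 V)} (h : IsEdgeCoalition G A B) : A ≠ B := by
  rintro rfl
  exact h.2.1 (by simpa using h.2.2.2)

theorem IsEdgeCoalition.left_nonempty {A B : Set (Sym2 V)} (h : IsEdgeCoalition G A B) :
    A.Nonempty := by
  rw [Set.nonempty_iff_ne_empty]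
  rintro rfl
  exact h.2.2.1 (by simpa using h.2.2.2)

theorem IsEdgeCoalition.symm {A B : Set (Sym2 V)} (h : IsEdgeCoalition G A B) :
    IsEdgeCoalition G B A :=
  ⟨h.1.symm, h.2.2.1, h.2.1, Set.union_comm A B ▸ h.2.2.2⟩

theorem isEdgeDominating_pair_of_singleton {e h g : Sym2 V} (he : IsEdgeDominating G {e})
    (hh : h ∈ G.edgeSet) (hg : g ∈ G.edgeSet) (hhg : ¬ SharesEndpoint h g) :
    IsEdgeDominating G {h, g} := by
  have hshares := (isEdgeDominating_singleton_iff.1 he).2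
  obtain ⟨p, hph, hpe⟩ := hshares h hh
  obtain ⟨q, hqg, hqe⟩ := hshares g hg
  have hpq : p ≠ q := by
    rintro rfl
    exact hhg ⟨p, hph, hqg⟩
  obtain rfl := (Sym2.mem_and_mem_iff hpq).1 ⟨hpe, hqe⟩
  refine isEdgeDominating_iff_forall_sharesEndpoint.2
    ⟨Set.insert_subset hh (Set.singleton_subset_iff.2 hg), fun k hk ↦ ?_⟩
  obtain ⟨v, hvk, hv⟩ := hshares k hk
  rcases Sym2.mem_iff.1 hv with rfl | rfl
  · exact ⟨h, Or.inl rfl, v, hvk, hph⟩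
  · exact ⟨g, Or.inr rfl, v, hvk, hqg⟩

theorem isECPartition_image_singleton_s14 {e : Sym2 V} (he : IsEdgeDominating G {e}) :
    IsECPartition G ((fun f ↦ ({f} : Set (Sym2 V))) '' G.edgeSet) := by
  refine ⟨?_, ?_, by simp [Set.sUnion_image], ?_⟩
  · rintro _ ⟨f, -, rfl⟩
    exact Set.singleton_nonempty f
  · rintro _ ⟨f, -, rfl⟩ _ ⟨g, -, rfl⟩ hfg
    exact Set.disjoint_singleton.2 fun h ↦ hfg (h ▸ rfl)
  rintro _ ⟨h, hh, rfl⟩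
  by_cases hdom : IsEdgeDominating G {h}
  · exact Or.inl ⟨⟨h, rfl⟩, hdom⟩
  obtain ⟨g, hg, hgh⟩ : ∃ g ∈ G.edgeSet, ¬ SharesEndpoint g h := by
    simpa [isEdgeDominating_singleton_iff, hh] using hdom
  have hhg : ¬ SharesEndpoint h g := fun hhg ↦ hgh hhg.symm
  have hdom' : ¬ IsEdgeDominating G {g} := fun hg' ↦
    hhg ((isEdgeDominating_singleton_iff.1 hg').2 h hh)
  have hgh' : g ≠ h := by
    rintro rfl
    exact hhg (sharesEndpoint_self g)
  refine Or.inr ⟨hdom, {g}, ⟨g, hg, rfl⟩, Set.singleton_injective.ne hgh',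
    Set.disjoint_singleton.2 hgh'.symm, hdom, hdom', ?_⟩
  rw [Set.singleton_union]
  exact isEdgeDominating_pair_of_singleton he hh hg hhg

theorem exists_sharesEndpoint_of_connected (hconn : G.Connected) {e f : Sym2 V}
    (he : e ∈ G.edgeSet) (hf : f ∈ G.edgeSet) (hfe : f ≠ e) :
    ∃ g ∈ G.edgeSet, g ≠ e ∧ SharesEndpoint e g := by
  by_cases hef : SharesEndpoint e f
  · exact ⟨f, hf, hfe, hef⟩
  induction e using Sym2.ind with | _ a b =>
  induction f using Sym2.ind with | _ c d =>
  have hc : c ∉ s(a, b) := fun hc ↦ hef ⟨c, hc, Sym2.mem_mk_left c d⟩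
  -- the first dart of a walk from `a` to `c` that leaves the edge `ab`
  obtain ⟨w⟩ := hconn.preconnected a c
  obtain ⟨d, -, hd₁, hd₂⟩ :=
    w.exists_boundary_dart (· ∈ s(a, b)) (Sym2.mem_mk_left a b) hc
  refine ⟨d.edge, G.mem_edgeSet.2 d.adj, ?_, d.toProd.1, hd₁, Sym2.mem_mk_left _ _⟩
  intro hd
  exact hd₂ (hd ▸ Sym2.mem_mk_right _ _)

theorem exists_sharesEndpoint_of_not_isEdgeDominating (hconn : G.Connected) {e : Sym2 V}
    (he : e ∈ G.edgeSet) (hdom : ¬ IsEdgeDominating G {e}) :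
    ∃ g ∈ G.edgeSet, g ≠ e ∧ SharesEndpoint e g := by
  obtain ⟨f, hf, hfe⟩ : ∃ f ∈ G.edgeSet, f ≠ e := by
    by_contra! h
    exact hdom (isEdgeDominating_singleton_of_edgeSet_subset he h)
  exact exists_sharesEndpoint_of_connected hconn he hf hfe

-- Ore's argument for vertex domination, transposed to edges.
theorem isEdgeDominating_diff_of_minimal
    (hnbr : ∀ e ∈ G.edgeSet, ∃ g ∈ G.edgeSet, g ≠ e ∧ SharesEndpoint e g)
    {D : Set (Sym2 V)} (hD : Minimal (IsEdgeDominating G) D) :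
    IsEdgeDominating G (G.edgeSet \ D) := by
  refine ⟨Set.sdiff_subset, fun e ⟨he, heD'⟩ ↦ ?_⟩
  have heD : e ∈ D := by
    by_contra heD
    exact heD' ⟨he, heD⟩
  by_contra hno
  push Not at hno
  refine hD.not_prop_of_lt (Set.sdiff_singleton_ssubset.2 heD)
    ⟨fun f hf ↦ hD.1.1 hf.1, fun g ⟨hg, hgD'⟩ ↦ ?_⟩
  by_cases hge : g = e
  · subst hge
    obtain ⟨f, hf, hfg, hgf⟩ := hnbr g hg
    have hfD : f ∈ D := by
      by_contra hfD
      exact hno f ⟨hf, hfD⟩ hgf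
    exact ⟨f, ⟨hfD, hfg⟩, hgf⟩
  · have hgD : g ∉ D := fun h ↦ hgD' ⟨h, hge⟩
    obtain ⟨f, hfD, hgf⟩ := hD.1.2 g ⟨hg, hgD⟩
    refine ⟨f, ⟨hfD, ?_⟩, hgf⟩
    rintro rfl
    exact hno g ⟨hg, hgD⟩ hgf.symm

theorem isEdgeCoalition_singleton_diff {D : Set (Sym2 V)} (hD : Minimal (IsEdgeDominating G) D)
    {x : Sym2 V} (hx : x ∈ D) (hx' : ¬ IsEdgeDominating G {x}) :
    IsEdgeCoalition G {x} (D \ {x}) := by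
  refine ⟨Set.disjoint_sdiff_right, hx', hD.not_prop_of_lt (Set.sdiff_singleton_ssubset.2 hx), ?_⟩
  rw [Set.union_sdiff_cancel (Set.singleton_subset_iff.2 hx)]
  exact hD.1

theorem isECPartition_of_forall_exists_isEdgeDominating_union {P : Set (Set (Sym2 V))}
    (hdisj : P.Pairwise Disjoint) (hcover : ⋃₀ P = G.edgeSet)
    (hnd : ∀ A ∈ P, ¬ IsEdgeDominating G A)
    (hpartner : ∀ A ∈ P, ∃ B ∈ P, IsEdgeDominating G (A ∪ B)) :
    IsECPartition G P := by
  refine ⟨fun A hA ↦ ?_, hdisj, hcover, fun A hA ↦ Or.inr ⟨hnd A hA, ?_⟩⟩ <;>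
    obtain ⟨B, hB, hAB⟩ := hpartner A hA
  · rw [Set.nonempty_iff_ne_empty]
    rintro rfl
    exact hnd B hB (by simpa using hAB)
  · have hBA : B ≠ A := by
      rintro rfl
      exact hnd B hB (by simpa using hAB)
    exact ⟨B, hB, hBA, hdisj hA hB hBA.symm, hnd A hA, hnd B hB, hAB⟩

section Finite

variable [Finite V]

theorem IsECPartition.ncard_le {P : Set (Set (Sym2 V))} (hP : IsECPartition G P) :
    P.ncard ≤ G.edgeSet.ncard :=
  hP.2.2.1 ▸ Set.ncard_le_ncard_sUnion hP.1 hP.2.1 (hP.2.2.1 ▸ Set.toFinite _)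

theorem IsECPartition.ncard_le_edgeCoalitionNumber {P : Set (Set (Sym2 V))}
    (hP : IsECPartition G P) : P.ncard ≤ edgeCoalitionNumber G :=
  le_csSup ⟨G.edgeSet.ncard, fun _ ⟨_, hQ, hk⟩ ↦ hk ▸ hQ.ncard_le⟩ ⟨P, hP, rfl⟩

theorem edgeCoalitionNumber_le_ncard : edgeCoalitionNumber G ≤ G.edgeSet.ncard :=
  csSup_le' fun _ ⟨_, hP, hk⟩ ↦ hk ▸ hP.ncard_le

theorem edgeCoalitionNumber_eq_ncard {e : Sym2 V} (he : IsEdgeDominating G {e}) :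
    edgeCoalitionNumber G = G.edgeSet.ncard := by
  refine le_antisymm edgeCoalitionNumber_le_ncard ?_
  have := (isECPartition_image_singleton_s14 he).ncard_le_edgeCoalitionNumber
  rwa [Set.ncard_image_of_injective _ Set.singleton_injective] at this

theorem exists_isECPartition_four_le_ncard_of_isEdgeCoalition {A₁ A₂ A₃ A₄ : Set (Sym2 V)}
    (h₁₂ : IsEdgeCoalition G A₁ A₂) (h₃₄ : IsEdgeCoalition G A₃ A₄)
    (hdisj : Disjoint (A₁ ∪ A₂) (A₃ ∪ A₄))
    (hγ : ∀ e ∈ G.edgeSet, ¬ IsEdgeDominating G {e})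
    (hrest : ∀ e ∈ G.edgeSet \ (A₁ ∪ A₂ ∪ (A₃ ∪ A₄)), IsEdgeDominating G (A₄ ∪ {e})) :
    ∃ P, IsECPartition G P ∧ 4 ≤ P.ncard := by
  set Q : Set (Set (Sym2 V)) := {A₁, A₂} ∪ {A₃, A₄}
  set R := G.edgeSet \ (A₁ ∪ A₂ ∪ (A₃ ∪ A₄))
  have hQ : ⋃₀ Q = A₁ ∪ A₂ ∪ (A₃ ∪ A₄) := by
    simp only [Q, Set.sUnion_union, Set.sUnion_insert, Set.sUnion_singleton]
  have hQE : ⋃₀ Q ⊆ G.edgeSet := hQ ▸ Set.union_subset h₁₂.2.2.2.1 h₃₄.2.2.2.1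
  have hcross : ∀ A ∈ ({A₁, A₂} : Set _), ∀ B ∈ ({A₃, A₄} : Set _), Disjoint A B := by
    rintro A hA B hB
    refine hdisj.mono ?_ ?_ <;> [rcases hA with rfl | rfl; rcases hB with rfl | rfl] <;> simp
  have hcross_ne : ∀ A ∈ ({A₁, A₂} : Set _), ∀ B ∈ ({A₃, A₄} : Set _), A ≠ B := by
    rintro A hA B hB rfl
    have hne : A.Nonempty := by
      rcases hA with rfl | rfl
      exacts [h₁₂.left_nonempty, h₁₂.symm.left_nonempty]
    exact hne.ne_empty (disjoint_self.1 (hcross A hA A hB))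
  refine ⟨Q ∪ (fun e ↦ {e}) '' R,
    isECPartition_of_forall_exists_isEdgeDominating_union ?_ ?_ ?_ ?_, ?_⟩
  · refine Set.pairwise_disjoint_union_image_singleton ?_ fun A hA ↦ ?_
    · refine Set.pairwise_union_of_symm.2 ⟨?_, ?_, fun A hA B hB _ ↦ hcross A hA B hB⟩ <;>
        refine Set.pairwise_pair.2 fun _ ↦ ⟨?_, Disjoint.symm ?_⟩
      exacts [h₁₂.1, h₁₂.1, h₃₄.1, h₃₄.1]
    · exact Set.disjoint_sdiff_right.mono_left (hQ ▸ Set.subset_sUnion_of_mem hA)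
  · rw [Set.sUnion_union, Set.sUnion_image, Set.biUnion_of_singleton, hQ,
      Set.union_sdiff_cancel (hQ ▸ hQE)]
  · rintro A (((rfl | rfl) | (rfl | rfl)) | ⟨e, he, rfl⟩)
    exacts [h₁₂.2.1, h₁₂.2.2.1, h₃₄.2.1, h₃₄.2.2.1, hγ e he.1]
  · have hmem : ∀ A ∈ Q, A ∈ Q ∪ (fun e ↦ {e}) '' R := fun A hA ↦ Or.inl hA
    rintro A (((rfl | rfl) | (rfl | rfl)) | ⟨e, he, rfl⟩)
    · exact ⟨A₂, hmem _ (by simp [Q]), h₁₂.2.2.2⟩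
    · exact ⟨A₁, hmem _ (by simp [Q]), h₁₂.symm.2.2.2⟩
    · exact ⟨A₄, hmem _ (by simp [Q]), h₃₄.2.2.2⟩
    · exact ⟨A₃, hmem _ (by simp [Q]), h₃₄.symm.2.2.2⟩
    · exact ⟨A₄, hmem _ (by simp [Q]), Set.union_comm A₄ {e} ▸ hrest e he⟩
  · have hQ4 : Q.ncard = 4 := by
      rw [Set.ncard_union_eq, Set.ncard_pair h₁₂.ne, Set.ncard_pair h₃₄.ne]
      exact Set.disjoint_left.2 fun A hA hB ↦ hcross_ne A hA A hB rfl
    exact hQ4 ▸ Set.ncard_le_ncard Set.subset_union_left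

theorem exists_isECPartition_four_le_ncard_of_minimal {DA DB L : Set (Sym2 V)}
    (hA : Minimal (IsEdgeDominating G) DA) (hB : Minimal (IsEdgeDominating G) DB)
    (hAB : Disjoint DA DB) (hLE : L ⊆ G.edgeSet) (hLA : Disjoint L DA) (hLB : Disjoint L DB)
    (hLmax : ∀ e ∈ G.edgeSet, e ∉ DA → e ∉ DB → e ∉ L → IsEdgeDominating G (L ∪ {e}))
    {y : Sym2 V} (hy : y ∈ DB) (hLy : ¬ IsEdgeDominating G (L ∪ {y}))
    (hγ : ∀ e ∈ G.edgeSet, ¬ IsEdgeDominating G {e}) :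
    ∃ P, IsECPartition G P ∧ 4 ≤ P.ncard := by
  obtain ⟨x, hx⟩ := hA.1.nonempty ⟨y, hB.1.1 hy⟩
  have hxA : {x} ∪ DA \ {x} = DA := Set.union_sdiff_cancel (Set.singleton_subset_iff.2 hx)
  have hyB : DB \ {y} ∪ (L ∪ {y}) = DB ∪ L := by
    rw [Set.union_comm L, ← Set.union_assoc, Set.sdiff_union_self,
      Set.union_eq_left.2 (Set.singleton_subset_iff.2 hy)]
  refine exists_isECPartition_four_le_ncard_of_isEdgeCoalition
    (isEdgeCoalition_singleton_diff hA hx (hγ x (hA.1.1 hx)))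
    ⟨Set.disjoint_union_right.2 ⟨hLB.symm.mono_left Set.sdiff_subset, Set.disjoint_sdiff_left⟩,
      hB.not_prop_of_lt (Set.sdiff_singleton_ssubset.2 hy), hLy,
      hyB ▸ hB.1.mono Set.subset_union_left (Set.union_subset hB.1.1 hLE)⟩ ?_ hγ ?_
  · rw [hxA, hyB]
    exact Set.disjoint_union_right.2 ⟨hAB, hLA.symm⟩
  · intro e he
    rw [hxA, hyB] at he
    simp only [Set.mem_sdiff, Set.mem_union, not_or] at he
    exact (hLmax e he.1 he.2.1 he.2.2.1 he.2.2.2).mono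
      (Set.union_subset_union_left _ Set.subset_union_left)
      (Set.union_subset (Set.union_subset hLE (Set.singleton_subset_iff.2 (hB.1.1 hy)))
        (Set.singleton_subset_iff.2 he.1))

theorem exists_isECPartition_four_le_ncard_of_maximal {L D : Set (Sym2 V)}
    (hL : ¬ IsEdgeDominating G L) (hLmax : ∀ e ∈ G.edgeSet \ L, IsEdgeDominating G (L ∪ {e}))
    {w : Sym2 V} (hw : w ∈ G.edgeSet) (hwL : w ∉ L)
    (hD : IsEdgeDominating G D) (hDL : Disjoint D (L ∪ {w}))
    (hγ : ∀ e ∈ G.edgeSet, ¬ IsEdgeDominating G {e}) :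
    ∃ P, IsECPartition G P ∧ 4 ≤ P.ncard := by
  obtain ⟨S, hSD, hS⟩ := exists_minimal_le_of_wellFoundedLT (IsEdgeDominating G)
    (G.edgeSet \ (L ∪ {w})) (hD.mono (Set.subset_sdiff.2 ⟨hD.1, hDL⟩) Set.sdiff_subset)
  obtain ⟨s, hs⟩ := hS.1.nonempty ⟨w, hw⟩
  have hsS : {s} ∪ S \ {s} = S := Set.union_sdiff_cancel (Set.singleton_subset_iff.2 hs)
  refine exists_isECPartition_four_le_ncard_of_isEdgeCoalition
    (isEdgeCoalition_singleton_diff hS hs (hγ s (hS.1.1 hs)))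
    ⟨Set.disjoint_singleton_left.2 hwL, hγ w hw, hL,
      Set.union_comm L {w} ▸ hLmax w ⟨hw, hwL⟩⟩ ?_ hγ ?_
  · rw [hsS, Set.union_comm]
    exact (Set.subset_sdiff.1 hSD).2
  · intro e he
    exact hLmax e ⟨he.1, fun heL ↦ he.2 (Or.inr (Or.inr heL))⟩

theorem exists_isECPartition_four_le_ncard (hconn : G.Connected) (hE : G.edgeSet.Nonempty)
    (hγ : ∀ e ∈ G.edgeSet, ¬ IsEdgeDominating G {e}) :
    ∃ P, IsECPartition G P ∧ 4 ≤ P.ncard := by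
  obtain ⟨D₁, -, hD₁⟩ := exists_minimal_le_of_wellFoundedLT _ _ (isEdgeDominating_edgeSet (G := G))
  obtain ⟨D₂, hD₂₁, hD₂⟩ := exists_minimal_le_of_wellFoundedLT _ _
    (isEdgeDominating_diff_of_minimal
      (fun e he ↦ exists_sharesEndpoint_of_not_isEdgeDominating hconn he (hγ e he)) hD₁)
  have hD₁₂ : Disjoint D₁ D₂ := (Set.subset_sdiff.1 hD₂₁).2.symm
  obtain ⟨L, -, ⟨hLsub, hL⟩, hLmax⟩ := exists_maximal_ge_of_wellFoundedGT
    (fun L ↦ L ⊆ G.edgeSet \ (D₁ ∪ D₂) ∧ ¬ IsEdgeDominating G L) ∅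
    ⟨Set.empty_subset _, fun h ↦ (h.nonempty hE).ne_empty rfl⟩
  obtain ⟨hLE, hL₁₂⟩ := Set.subset_sdiff.1 hLsub
  have hL₁ : Disjoint L D₁ := hL₁₂.mono_right Set.subset_union_left
  have hL₂ : Disjoint L D₂ := hL₁₂.mono_right Set.subset_union_right
  have hLmax' : ∀ e ∈ G.edgeSet, e ∉ D₁ → e ∉ D₂ → e ∉ L → IsEdgeDominating G (L ∪ {e}) := by
    intro e he he₁ he₂ heL
    by_contra hLe
    refine heL (hLmax ⟨Set.union_subset hLsub ?_, hLe⟩ Set.subset_union_left (Or.inr rfl))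
    exact Set.singleton_subset_iff.2 ⟨he, by simp [he₁, he₂]⟩
  by_cases hy : ∃ y ∈ D₁ ∪ D₂, ¬ IsEdgeDominating G (L ∪ {y})
  · obtain ⟨y, hy₁ | hy₂, hLy⟩ := hy
    · exact exists_isECPartition_four_le_ncard_of_minimal hD₂ hD₁ hD₁₂.symm hLE hL₂ hL₁
        (fun e he he₂ he₁ ↦ hLmax' e he he₁ he₂) hy₁ hLy hγ
    · exact exists_isECPartition_four_le_ncard_of_minimal hD₁ hD₂ hD₁₂ hLE hL₁ hL₂
        hLmax' hy₂ hLy hγ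
  push Not at hy
  obtain ⟨w, hw⟩ := hD₁.1.nonempty hE
  have hwL : w ∉ L := fun hwL ↦ Set.disjoint_left.1 hL₁ hwL hw
  refine exists_isECPartition_four_le_ncard_of_maximal hL (fun e ⟨he, heL⟩ ↦ ?_) (hD₁.1.1 hw) hwL
    hD₂.1 (Set.disjoint_union_right.2 ⟨hL₂.symm, Set.disjoint_singleton_right.2 fun hw₂ ↦
      Set.disjoint_left.1 hD₁₂ hw hw₂⟩) hγ
  by_cases he₁₂ : e ∈ D₁ ∪ D₂
  · exact hy e he₁₂
  · exact hLmax' e he (fun h ↦ he₁₂ (Or.inl h)) (fun h ↦ he₁₂ (Or.inr h)) heL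

theorem four_le_edgeCoalitionNumber (hconn : G.Connected) (hE : G.edgeSet.Nonempty)
    (hγ : ∀ e ∈ G.edgeSet, ¬ IsEdgeDominating G {e}) : 4 ≤ edgeCoalitionNumber G :=
  let ⟨_, hP, h4⟩ := exists_isECPartition_four_le_ncard hconn hE hγ
  h4.trans hP.ncard_le_edgeCoalitionNumber

end Finite

theorem Iso.ncard_edgeSet_eq {W : Type*} {H : SimpleGraph W} (φ : G ≃g H) :
    G.edgeSet.ncard = H.edgeSet.ncard := by
  rw [← Nat.card_coe_set_eq, ← Nat.card_coe_set_eq]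
  exact Nat.card_congr φ.mapEdgeSet

theorem exists_mem_edgeSet_of_connected (hconn : G.Connected) (hE : G.edgeSet.Nonempty) (v : V) :
    ∃ e ∈ G.edgeSet, v ∈ e := by
  obtain ⟨e, he⟩ := hE
  induction e using Sym2.ind with | _ a b =>
  have : Nontrivial V := ⟨⟨a, b, G.ne_of_adj he⟩⟩
  obtain ⟨u, hu⟩ := hconn.preconnected.exists_adj_of_nontrivial v
  exact ⟨s(v, u), hu, Sym2.mem_mk_left v u⟩

theorem nonempty_iso_of_injective (hconn : G.Connected) (hE : G.edgeSet.Nonempty)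
    {W : Type*} {H : SimpleGraph W} {f : W → V} (hf : f.Injective)
    (hGH : G.edgeSet = Sym2.map f '' H.edgeSet) : Nonempty (G ≃g H) := by
  have hsurj : f.Surjective := fun v ↦ by
    obtain ⟨e, he, hv⟩ := exists_mem_edgeSet_of_connected hconn hE v
    rw [hGH] at he
    obtain ⟨e', -, rfl⟩ := he
    obtain ⟨w, -, hw⟩ := Sym2.mem_map.1 hv
    exact ⟨w, hw⟩
  obtain rfl : G = H.map (Equiv.ofBijective f ⟨hf, hsurj⟩).toEmbedding :=
    edgeSet_injective (by rw [edgeSet_map]; exact hGH)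
  exact ⟨(Iso.map _ H).symm⟩

theorem edgeSet_top_fin_three :
    (⊤ : SimpleGraph (Fin 3)).edgeSet = {s(0, 1), s(0, 2), s(1, 2)} := by
  ext e
  induction e using Sym2.ind with | _ x y =>
  simp only [mem_edgeSet, top_adj, Set.mem_insert_iff, Set.mem_singleton_iff, Sym2.eq_iff]
  revert x y
  decide

theorem edgeSet_pathGraph_four : (pathGraph 4).edgeSet = {s(0, 1), s(1, 2), s(2, 3)} := by
  ext e
  induction e using Sym2.ind with | _ x y =>
  simp only [mem_edgeSet, pathGraph_adj, Set.mem_insert_iff, Set.mem_singleton_iff, Sym2.eq_iff]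
  revert x y
  decide

theorem edgeSet_starGraph_three : (_root_.starGraph 3).edgeSet = {s(0, 1), s(0, 2), s(0, 3)} := by
  ext e
  induction e using Sym2.ind with | _ x y =>
  simp only [mem_edgeSet, _root_.starGraph, fromRel_adj, Set.mem_insert_iff, Set.mem_singleton_iff,
    Sym2.eq_iff]
  revert x y
  decide

theorem nonempty_iso_top_fin_three (hconn : G.Connected) {a b c : V} (hab : a ≠ b) (hac : a ≠ c)
    (hbc : b ≠ c) (hE : G.edgeSet = {s(a, b), s(a, c), s(b, c)}) :
    Nonempty (G ≃g (⊤ : SimpleGraph (Fin 3))) := by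
  refine nonempty_iso_of_injective hconn (f := ![a, b, c]) (hE ▸ by simp) (fun i j _ ↦ ?_) ?_
  · fin_cases i <;> fin_cases j <;> simp_all [eq_comm]
  · rw [hE, edgeSet_top_fin_three]
    simp [Set.image_insert_eq]

theorem nonempty_iso_pathGraph_four (hconn : G.Connected) {a b c d : V} (hab : a ≠ b)
    (hac : a ≠ c) (had : a ≠ d) (hbc : b ≠ c) (hbd : b ≠ d) (hcd : c ≠ d)
    (hE : G.edgeSet = {s(a, b), s(b, c), s(c, d)}) : Nonempty (G ≃g pathGraph 4) := by
  refine nonempty_iso_of_injective hconn (f := ![a, b, c, d]) (hE ▸ by simp) (fun i j _ ↦ ?_) ?_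
  · fin_cases i <;> fin_cases j <;> simp_all [eq_comm]
  · rw [hE, edgeSet_pathGraph_four]
    simp [Set.image_insert_eq]

theorem nonempty_iso_starGraph_three (hconn : G.Connected) {a b c d : V} (hab : a ≠ b)
    (hac : a ≠ c) (had : a ≠ d) (hbc : b ≠ c) (hbd : b ≠ d) (hcd : c ≠ d)
    (hE : G.edgeSet = {s(a, b), s(a, c), s(a, d)}) : Nonempty (G ≃g _root_.starGraph 3) := by
  refine nonempty_iso_of_injective hconn (f := ![a, b, c, d]) (hE ▸ by simp) (fun i j _ ↦ ?_) ?_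
  · fin_cases i <;> fin_cases j <;> simp_all [eq_comm]
  · rw [hE, edgeSet_starGraph_three]
    simp [Set.image_insert_eq]

theorem edgeSet_eq_triangle_or_path_of_mem {c p q : V} {h : Sym2 V} (hcp : c ≠ p) (hcq : c ≠ q)
    (hpq : p ≠ q) (hE : G.edgeSet = {s(c, p), s(c, q), h}) (hc : c ∉ h) (hp : p ∈ h) :
    (∃ a b c : V, a ≠ b ∧ a ≠ c ∧ b ≠ c ∧ G.edgeSet = {s(a, b), s(a, c), s(b, c)}) ∨
    (∃ a b c d : V, a ≠ b ∧ a ≠ c ∧ a ≠ d ∧ b ≠ c ∧ b ≠ d ∧ c ≠ d ∧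
      G.edgeSet = {s(a, b), s(b, c), s(c, d)}) := by
  obtain ⟨r, rfl⟩ := Sym2.mem_iff_exists.1 hp
  have hpr : p ≠ r := G.ne_of_adj (show s(p, r) ∈ G.edgeSet by simp [hE])
  have hcr : c ≠ r := fun hcr ↦ hc (hcr ▸ Sym2.mem_mk_right p c)
  by_cases hqr : q = r
  · subst hqr
    exact Or.inl ⟨c, p, q, hcp, hcq, hpq, hE⟩
  · refine Or.inr ⟨q, c, p, r, hcq.symm, hpq.symm, hqr, hcp, hcr, hpr, ?_⟩
    rw [hE, Sym2.eq_swap (a := q), Set.insert_comm]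

theorem edgeSet_eq_triangle_or_path_or_star_of_sharesEndpoint (hconn : G.Connected)
    {c p q : V} {h : Sym2 V} (hcp : c ≠ p) (hcq : c ≠ q) (hpq : p ≠ q)
    (hE : G.edgeSet = {s(c, p), s(c, q), h}) (hhp : h ≠ s(c, p)) (hhq : h ≠ s(c, q)) :
    (∃ a b c : V, a ≠ b ∧ a ≠ c ∧ b ≠ c ∧ G.edgeSet = {s(a, b), s(a, c), s(b, c)}) ∨
    (∃ a b c d : V, a ≠ b ∧ a ≠ c ∧ a ≠ d ∧ b ≠ c ∧ b ≠ d ∧ c ≠ d ∧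
      G.edgeSet = {s(a, b), s(b, c), s(c, d)}) ∨
    (∃ a b c d : V, a ≠ b ∧ a ≠ c ∧ a ≠ d ∧ b ≠ c ∧ b ≠ d ∧ c ≠ d ∧
      G.edgeSet = {s(a, b), s(a, c), s(a, d)}) := by
  by_cases hc : c ∈ h
  · obtain ⟨r, rfl⟩ := Sym2.mem_iff_exists.1 hc
    have hcr : c ≠ r := G.ne_of_adj (show s(c, r) ∈ G.edgeSet by simp [hE])
    refine Or.inr (Or.inr ⟨c, p, q, r, hcp, hcq, hcr, hpq, ?_, ?_, hE⟩) <;> rintro rfl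
    exacts [hhp rfl, hhq rfl]
  obtain ⟨k, hk, hkh, t, hth, htk⟩ :=
    exists_sharesEndpoint_of_connected hconn (e := h) (by simp [hE]) (by simp [hE]) hhp.symm
  rw [hE] at hk
  rcases hk with rfl | rfl | rfl
  · obtain rfl : t = p := (Sym2.mem_iff.1 htk).resolve_left (by rintro rfl; exact hc hth)
    exact (edgeSet_eq_triangle_or_path_of_mem hcp hcq hpq hE hc hth).imp_right Or.inl
  · obtain rfl : t = q := (Sym2.mem_iff.1 htk).resolve_left (by rintro rfl; exact hc hth)
    exact (edgeSet_eq_triangle_or_path_of_mem hcq hcp hpq.symm (by rw [hE, Set.insert_comm]) hc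
      hth).imp_right Or.inl
  · exact absurd rfl hkh

theorem edgeSet_eq_triangle_or_path_or_star (hconn : G.Connected) (h3 : G.edgeSet.ncard = 3) :
    (∃ a b c : V, a ≠ b ∧ a ≠ c ∧ b ≠ c ∧ G.edgeSet = {s(a, b), s(a, c), s(b, c)}) ∨
    (∃ a b c d : V, a ≠ b ∧ a ≠ c ∧ a ≠ d ∧ b ≠ c ∧ b ≠ d ∧ c ≠ d ∧
      G.edgeSet = {s(a, b), s(b, c), s(c, d)}) ∨
    (∃ a b c d : V, a ≠ b ∧ a ≠ c ∧ a ≠ d ∧ b ≠ c ∧ b ≠ d ∧ c ≠ d ∧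
      G.edgeSet = {s(a, b), s(a, c), s(a, d)}) := by
  obtain ⟨e, f, g, hef, heg, hfg, hE⟩ := Set.ncard_eq_three.1 h3
  obtain ⟨k, hk, hke, c, hce, hck⟩ :=
    exists_sharesEndpoint_of_connected hconn (by simp [hE]) (by simp [hE]) hef.symm
  obtain ⟨h, hE', hhe, hhk⟩ : ∃ h, G.edgeSet = {e, k, h} ∧ h ≠ e ∧ h ≠ k := by
    rw [hE] at hk
    rcases hk with rfl | rfl | rfl
    · exact absurd rfl hke
    · exact ⟨g, hE, heg.symm, hfg.symm⟩
    · exact ⟨f, by rw [hE, Set.pair_comm], hef.symm, hfg⟩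
  obtain ⟨p, rfl⟩ := Sym2.mem_iff_exists.1 hce
  obtain ⟨q, rfl⟩ := Sym2.mem_iff_exists.1 hck
  have hpq : p ≠ q := by
    rintro rfl
    exact hke rfl
  exact edgeSet_eq_triangle_or_path_or_star_of_sharesEndpoint hconn
    (G.ne_of_adj (show s(c, p) ∈ G.edgeSet by simp [hE']))
    (G.ne_of_adj (show s(c, q) ∈ G.edgeSet by simp [hE'])) hpq hE' hhe hhk

theorem exists_isEdgeDominating_singleton_of_ncard_eq_three (hconn : G.Connected)
    (h3 : G.edgeSet.ncard = 3) : ∃ e, IsEdgeDominating G {e} := by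
  rcases edgeSet_eq_triangle_or_path_or_star hconn h3 with
    ⟨a, b, c, -, -, -, hE⟩ | ⟨a, b, c, d, -, -, -, -, -, -, hE⟩ | ⟨a, b, c, d, -, -, -, -, -, -, hE⟩
  · exact ⟨s(a, b), by simp [isEdgeDominating_singleton_iff, hE, SharesEndpoint]⟩
  · exact ⟨s(b, c), by simp [isEdgeDominating_singleton_iff, hE, SharesEndpoint]⟩
  · exact ⟨s(a, b), by simp [isEdgeDominating_singleton_iff, hE, SharesEndpoint]⟩

theorem nonempty_iso_of_ncard_eq_three (hconn : G.Connected) (h3 : G.edgeSet.ncard = 3) :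
    Nonempty (G ≃g (⊤ : SimpleGraph (Fin 3))) ∨ Nonempty (G ≃g pathGraph 4) ∨
      Nonempty (G ≃g _root_.starGraph 3) := by
  rcases edgeSet_eq_triangle_or_path_or_star hconn h3 with
    ⟨a, b, c, hab, hac, hbc, hE⟩ | ⟨a, b, c, d, hab, hac, had, hbc, hbd, hcd, hE⟩ |
      ⟨a, b, c, d, hab, hac, had, hbc, hbd, hcd, hE⟩
  · exact Or.inl (nonempty_iso_top_fin_three hconn hab hac hbc hE)
  · exact Or.inr (Or.inl (nonempty_iso_pathGraph_four hconn hab hac had hbc hbd hcd hE))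
  · exact Or.inr (Or.inr (nonempty_iso_starGraph_three hconn hab hac had hbc hbd hcd hE))

end SimpleGraph

/-- For a finite connected simple graph, `EC(G) = 3` iff `G` is isomorphic to
one of `K₃`, `P₄`, `K_{1,3}`. -/
theorem edgeCoalitionNumber_eq_three_iff {V : Type*} [Fintype V] (G : SimpleGraph V)
    (hconn : G.Connected) :
    edgeCoalitionNumber G = 3 ↔
      (Nonempty (G ≃g (⊤ : SimpleGraph (Fin 3))) ∨
       Nonempty (G ≃g SimpleGraph.pathGraph 4) ∨
       Nonempty (G ≃g _root_.starGraph 3)) := by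
  constructor
  · intro hEC
    obtain ⟨e, he⟩ : ∃ e, IsEdgeDominating G {e} := by
      by_contra! hdom
      have hE : G.edgeSet.Nonempty := Set.nonempty_of_ncard_ne_zero <| by
        have := edgeCoalitionNumber_le_ncard (G := G)
        omega
      have := four_le_edgeCoalitionNumber hconn hE fun e _ ↦ hdom e
      omega
    exact nonempty_iso_of_ncard_eq_three hconn (edgeCoalitionNumber_eq_ncard he ▸ hEC)
  · intro hiso
    have h3 : G.edgeSet.ncard = 3 := by
      rcases hiso with ⟨⟨φ⟩⟩ | ⟨⟨φ⟩⟩ | ⟨⟨φ⟩⟩ <;> rw [φ.ncard_edgeSet_eq, Set.ncard_eq_three]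
      exacts [⟨_, _, _, by decide, by decide, by decide, edgeSet_top_fin_three⟩,
        ⟨_, _, _, by decide, by decide, by decide, edgeSet_pathGraph_four⟩,
        ⟨_, _, _, by decide, by decide, by decide, edgeSet_starGraph_three⟩]
    obtain ⟨e, he⟩ := exists_isEdgeDominating_singleton_of_ncard_eq_three hconn h3
    rw [edgeCoalitionNumber_eq_ncard he, h3]
end

section
/- If T is a finite tree with at least one edge such that EC(T) equals the number of edges of T (equivalently, the singleton partition of the edge set of T is an ec-partition), then every path in T has length at most 4. -/
open SimpleGraph

lemma walk_getVert_ne {V : Type*} {G : SimpleGraph V} {u v : V} (p : G.Walk u v)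
    (hp : p.IsPath) : ∀ i j, i < j → j ≤ p.length → p.getVert i ≠ p.getVert j := by
  induction p with
  | nil => intro i j hij hj; simp [Walk.length_nil] at hj; omega
  | cons h q ih =>
    rw [Walk.cons_isPath_iff] at hp
    intro i j hij hj
    match i, j with
    | 0, (k+1) =>
      simp only [Walk.getVert_zero, Walk.getVert_cons_succ]
      intro hEq
      exact hp.2 (Walk.mem_support_iff_exists_getVert.mpr
        ⟨k, hEq.symm, by simpa [Walk.length_cons] using hj⟩)
    | (m+1), (k+1) =>
      simp only [Walk.getVert_cons_succ]
      exact ih hp.1 m k (by omega) (by simpa [Walk.length_cons] using hj)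

lemma path_len_one {V : Type*} {G : SimpleGraph V} (hacyc : G.IsAcyclic) {a b : V}
    (hab : G.Adj a b) {q : G.Walk a b} (hq : q.IsPath) : q.length = 1 := by
  have h := (isAcyclic_iff_path_unique.mp hacyc) ⟨q, hq⟩ (Path.singleton hab)
  have h2 : q = Walk.cons hab Walk.nil := congrArg Subtype.val h
  rw [h2]; rfl

/-- If `T` is a finite tree with at least one edge whose edge coalition number
equals its number of edges, then every path in `T` has length at most 4. -/
theorem tree_path_length_le_of_ec_eq_size {V : Type*} [Fintype V] (G : SimpleGraph V)
    (hconn : G.Connected) (hacyc : G.IsAcyclic) (hedge : G.edgeSet.Nonempty)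
    (hec : edgeCoalitionNumber G = G.edgeSet.ncard) :
    ∀ (u v : V) (p : G.Walk u v), p.IsPath → p.length ≤ 4 := by
  classical
  have hEfin : G.edgeSet.Finite := Set.toFinite _
  set n := G.edgeSet.ncard with hn
  -- the choice function
  set c : Set (Sym2 V) → Sym2 V := fun A => if h : A.Nonempty then h.some else hedge.some
    with hc
  have hcmem : ∀ A : Set (Sym2 V), A.Nonempty → c A ∈ A := by
    intro A hA
    simp only [hc, dif_pos hA]
    exact hA.some_mem
  -- any ec-partition has at most n parts, via injectivity of c
  have key : ∀ P : Set (Set (Sym2 V)), IsECPartition G P →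
      (∀ A ∈ P, c A ∈ G.edgeSet) ∧ Set.InjOn c P := by
    intro P hP
    have hsub : ∀ A ∈ P, A ⊆ G.edgeSet := by
      intro A hA
      rw [← hP.2.2.1]
      exact Set.subset_sUnion_of_mem hA
    constructor
    · intro A hA
      exact hsub A hA (hcmem A (hP.1 A hA))
    · intro A hA B hB hAB
      by_contra hne
      have hd := hP.2.1 hA hB hne
      exact (hd.ne_of_mem (hcmem A (hP.1 A hA)) (hcmem B (hP.1 B hB))) hAB
  have hbdd : BddAbove {k | ∃ P, IsECPartition G P ∧ P.ncard = k} := by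
    refine ⟨n, ?_⟩
    rintro k ⟨P, hP, rfl⟩
    exact Set.ncard_le_ncard_of_injOn c (key P hP).1 (key P hP).2 hEfin
  have hnpos : 0 < n := (Set.ncard_pos hEfin).mpr hedge
  have hSne : {k | ∃ P, IsECPartition G P ∧ P.ncard = k}.Nonempty := by
    by_contra h
    rw [Set.not_nonempty_iff_eq_empty] at h
    rw [edgeCoalitionNumber, h] at hec
    simp at hec
    omega
  have hmem := Nat.sSup_mem hSne hbdd
  rw [edgeCoalitionNumber] at hec
  rw [hec] at hmem
  obtain ⟨P, hP, hcard⟩ := hmem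
  -- every part is a singleton
  have himg : c '' P = G.edgeSet := by
    apply Set.eq_of_subset_of_ncard_le
    · rintro _ ⟨A, hA, rfl⟩; exact (key P hP).1 A hA
    · rw [Set.ncard_image_of_injOn (key P hP).2, hcard]
    · exact hEfin
  have hsingle : ∀ A ∈ P, ∀ e ∈ A, A = {e} := by
    intro A hA e heA
    have heE : e ∈ G.edgeSet := by
      rw [← hP.2.2.1]; exact ⟨A, hA, heA⟩
    rw [← himg] at heE
    obtain ⟨B, hB, hBe⟩ := heE
    have hAB : B = A := by
      by_contra hne
      exact (hP.2.1 hB hA hne).ne_of_mem (hcmem B (hP.1 B hB)) heA hBe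
    subst hAB
    have hce : c B = e := hBe
    ext f
    simp only [Set.mem_singleton_iff]
    constructor
    · intro hf
      have hfE : f ∈ G.edgeSet := by rw [← hP.2.2.1]; exact ⟨B, hB, hf⟩
      rw [← himg] at hfE
      obtain ⟨B', hB', hB'f⟩ := hfE
      have : B' = B := by
        by_contra hne
        exact (hP.2.1 hB' hB hne).ne_of_mem (hcmem B' (hP.1 B' hB')) hf hB'f
      subst this
      rw [← hce, ← hB'f]
    · rintro rfl; rw [← hce]; exact hcmem B (hP.1 B hB)
  -- main argument
  intro u v p hp
  by_contra hlen
  push_neg at hlen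
  have h5 : 5 ≤ p.length := hlen
  set w : ℕ → V := p.getVert with hw
  have hadj : ∀ i, i < 5 → G.Adj (w i) (w (i+1)) := fun i hi =>
    p.adj_getVert_succ (by omega)
  have hne : ∀ i j, i < j → j ≤ 5 → w i ≠ w j := fun i j hij hj =>
    walk_getVert_ne p hp i j hij (by omega)
  set e : Sym2 V := s(w 2, w 3) with he
  set e1 : Sym2 V := s(w 0, w 1) with he1
  set e5 : Sym2 V := s(w 4, w 5) with he5
  have heE : e ∈ G.edgeSet := hadj 2 (by omega)
  have he1E : e1 ∈ G.edgeSet := hadj 0 (by omega)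
  have he5E : e5 ∈ G.edgeSet := hadj 4 (by omega)
  have he1e : e1 ≠ e := by
    intro h
    have : w 2 ∈ e1 := by rw [h]; simp [he]
    rw [he1, Sym2.mem_iff] at this
    rcases this with h' | h'
    · exact hne 0 2 (by omega) (by omega) h'.symm
    · exact hne 1 2 (by omega) (by omega) h'.symm
  have he5e : e5 ≠ e := by
    intro h
    have : w 2 ∈ e5 := by rw [h]; simp [he]
    rw [he5, Sym2.mem_iff] at this
    rcases this with h' | h'
    · exact hne 2 4 (by omega) (by omega) h'
    · exact hne 2 5 (by omega) (by omega) h'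
  have he1e5 : e1 ≠ e5 := by
    intro h
    have : w 0 ∈ e5 := by rw [← h]; simp [he1]
    rw [he5, Sym2.mem_iff] at this
    rcases this with h' | h'
    · exact hne 0 4 (by omega) (by omega) h'
    · exact hne 0 5 (by omega) (by omega) h'
  -- the part containing e
  have heU : e ∈ ⋃₀ P := by rw [hP.2.2.1]; exact heE
  obtain ⟨A, hA, heA⟩ := heU
  have hAe : A = {e} := hsingle A hA e heA
  subst hAe
  -- no single edge shares an endpoint with both e1 and e
  have hshare_e1 : ¬ SharesEndpoint e1 e := by
    rintro ⟨x, hx1, hx2⟩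
    rw [he1, Sym2.mem_iff] at hx1
    rw [he, Sym2.mem_iff] at hx2
    rcases hx1 with rfl | rfl <;> rcases hx2 with h' | h'
    · exact hne 0 2 (by omega) (by omega) h'
    · exact hne 0 3 (by omega) (by omega) h'
    · exact hne 1 2 (by omega) (by omega) h'
    · exact hne 1 3 (by omega) (by omega) h'
  have hshare_e5 : ¬ SharesEndpoint e5 e := by
    rintro ⟨x, hx1, hx2⟩
    rw [he5, Sym2.mem_iff] at hx1
    rw [he, Sym2.mem_iff] at hx2
    rcases hx1 with rfl | rfl <;> rcases hx2 with h' | h'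
    · exact hne 2 4 (by omega) (by omega) h'.symm
    · exact hne 3 4 (by omega) (by omega) h'.symm
    · exact hne 2 5 (by omega) (by omega) h'.symm
    · exact hne 3 5 (by omega) (by omega) h'.symm
  have hshare_e1e5 : ¬ SharesEndpoint e5 e1 := by
    rintro ⟨x, hx1, hx2⟩
    rw [he5, Sym2.mem_iff] at hx1
    rw [he1, Sym2.mem_iff] at hx2
    rcases hx1 with rfl | rfl <;> rcases hx2 with h' | h'
    · exact hne 0 4 (by omega) (by omega) h'.symm
    · exact hne 1 4 (by omega) (by omega) h'.symm
    · exact hne 0 5 (by omega) (by omega) h'.symm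
    · exact hne 1 5 (by omega) (by omega) h'.symm
  rcases hP.2.2.2 _ hA with ⟨_, hdom⟩ | ⟨hnd, B, hB, hBne, hco⟩
  · -- {e} dominating: but e1 is not covered
    obtain ⟨f, hf, hsh⟩ := hdom.2 e1 ⟨he1E, by simpa using he1e⟩
    rw [Set.mem_singleton_iff] at hf
    subst hf
    exact hshare_e1 hsh
  · -- coalition case
    obtain ⟨f, hfB⟩ := hP.1 B hB
    have hBf : B = {f} := hsingle B hB f hfB
    subst hBf
    have hu : IsEdgeDominating G ({e} ∪ {f}) := hco.2.2.2
    have hfE : f ∈ G.edgeSet := hu.1 (Or.inr rfl)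
    by_cases hfe1 : f = e1
    · subst hfe1
      obtain ⟨g, hg, hsh⟩ := hu.2 e5 ⟨he5E, by
        simp only [Set.mem_union, Set.mem_singleton_iff]
        push_neg
        exact ⟨he5e, fun h => he1e5 h.symm⟩⟩
      rcases hg with hg | hg <;> rw [Set.mem_singleton_iff] at hg <;> subst hg
      · exact hshare_e5 hsh
      · exact hshare_e1e5 hsh
    · -- f shares an endpoint with e1
      obtain ⟨g, hg, hsh⟩ := hu.2 e1 ⟨he1E, by
        simp only [Set.mem_union, Set.mem_singleton_iff]
        push_neg
        exact ⟨he1e, fun h => hfe1 h.symm⟩⟩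
      have hfe1' : SharesEndpoint e1 f := by
        rcases hg with hg | hg <;> rw [Set.mem_singleton_iff] at hg <;> subst hg
        · exact absurd hsh hshare_e1
        · exact hsh
      obtain ⟨a, ha1, haf⟩ := hfe1'
      by_cases hfe5 : f = e5
      · subst hfe5
        rw [he1, Sym2.mem_iff] at ha1
        rw [he5, Sym2.mem_iff] at haf
        rcases ha1 with rfl | rfl <;> rcases haf with h' | h'
        · exact hne 0 4 (by omega) (by omega) h'
        · exact hne 0 5 (by omega) (by omega) h'
        · exact hne 1 4 (by omega) (by omega) h'
        · exact hne 1 5 (by omega) (by omega) h'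
      · obtain ⟨g, hg, hsh5⟩ := hu.2 e5 ⟨he5E, by
          simp only [Set.mem_union, Set.mem_singleton_iff]
          push_neg
          exact ⟨he5e, fun h => hfe5 h.symm⟩⟩
        have hfe5' : SharesEndpoint e5 f := by
          rcases hg with hg | hg <;> rw [Set.mem_singleton_iff] at hg <;> subst hg
          · exact absurd hsh5 hshare_e5
          · exact hsh5
        obtain ⟨b, hb5, hbf⟩ := hfe5'
        rw [he1, Sym2.mem_iff] at ha1
        rw [he5, Sym2.mem_iff] at hb5
        have hab : a ≠ b := by
          rcases ha1 with rfl | rfl <;> rcases hb5 with rfl | rfl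
          · exact hne 0 4 (by omega) (by omega)
          · exact hne 0 5 (by omega) (by omega)
          · exact hne 1 4 (by omega) (by omega)
          · exact hne 1 5 (by omega) (by omega)
        have hfab : f = s(a, b) := (Sym2.mem_and_mem_iff hab).mp ⟨haf, hbf⟩
        have hGab : G.Adj a b := by rw [hfab] at hfE; exact hfE
        -- build the long path from a to b
        have h0 := hadj 0 (by omega)
        have h1 := hadj 1 (by omega)
        have h2 := hadj 2 (by omega)
        have h3 := hadj 3 (by omega)
        have h4 := hadj 4 (by omega)
        have hnodup : ∀ i j, i < j → j ≤ 5 → w i ≠ w j := hne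
        rcases ha1 with rfl | rfl <;> rcases hb5 with rfl | rfl
        · -- a = w 0, b = w 4 : path of length 4
          have hq : (Walk.cons h0 (Walk.cons h1 (Walk.cons h2 (Walk.cons h3
              Walk.nil)))).IsPath := by
            simp only [Walk.cons_isPath_iff, Walk.isPath_iff_eq_nil, Walk.support_cons,
              Walk.support_nil, List.mem_cons, List.mem_singleton]
            push_neg
            and_intros <;> first | trivial | (exact hnodup _ _ (by omega) (by omega)) | simp
          have := path_len_one hacyc hGab hq
          simp at this
        · -- a = w 0, b = w 5 : path of length 5
          have hq : (Walk.cons h0 (Walk.cons h1 (Walk.cons h2 (Walk.cons h3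
              (Walk.cons h4 Walk.nil))))).IsPath := by
            simp only [Walk.cons_isPath_iff, Walk.isPath_iff_eq_nil, Walk.support_cons,
              Walk.support_nil, List.mem_cons, List.mem_singleton]
            push_neg
            and_intros <;> first | trivial | (exact hnodup _ _ (by omega) (by omega)) | simp
          have := path_len_one hacyc hGab hq
          simp at this
        · -- a = w 1, b = w 4 : path of length 3
          have hq : (Walk.cons h1 (Walk.cons h2 (Walk.cons h3 Walk.nil))).IsPath := by
            simp only [Walk.cons_isPath_iff, Walk.isPath_iff_eq_nil, Walk.support_cons,
              Walk.support_nil, List.mem_cons, List.mem_singleton]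
            push_neg
            and_intros <;> first | trivial | (exact hnodup _ _ (by omega) (by omega)) | simp
          have := path_len_one hacyc hGab hq
          simp at this
        · -- a = w 1, b = w 5 : path of length 4
          have hq : (Walk.cons h1 (Walk.cons h2 (Walk.cons h3 (Walk.cons h4
              Walk.nil)))).IsPath := by
            simp only [Walk.cons_isPath_iff, Walk.isPath_iff_eq_nil, Walk.support_cons,
              Walk.support_nil, List.mem_cons, List.mem_singleton]
            push_neg
            and_intros <;> first | trivial | (exact hnodup _ _ (by omega) (by omega)) | simp
          have := path_len_one hacyc hGab hq
          simp at this
end
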